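/- arXiv:2204.08602 — 10 statements merged into one kernel-verified Lean document; each statement's English description precedes it below -/
import Mathlib

section
/- For all real λ ∈ [0,1) and all real x ≥ -1, exp(λx + x²(λ + log(1-λ))) ≤ 1 + λx. -/
/-! Fix `x ≥ -1` and regard `log (1 + l x) - l x - x² (l + log (1 - l))` as a function of `l`.
It vanishes at `l = 0` and its derivative `l² x² (1 + x) / ((1 - l) (1 + l x))` is nonnegative
on `[0, 1)`, so it is nonnegative there; exponentiating gives the inequality. -/

open Real Set

noncomputable def logGap (x t : ℝ) : ℝ :=
  log (1 + t * x) - t * x - x ^ 2 * (t + log (1 - t))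

lemma one_add_mul_pos {t x : ℝ} (ht : t ∈ Ico (0 : ℝ) 1) (hx : -1 ≤ x) : 0 < 1 + t * x := by
  nlinarith [mul_nonneg ht.1 (neg_le_iff_add_nonneg.1 hx), ht.2]

lemma hasDerivAt_logGap {x t : ℝ} (hxt : 0 < 1 + t * x) (ht : t < 1) :
    HasDerivAt (logGap x) (t ^ 2 * x ^ 2 * (1 + x) / ((1 - t) * (1 + t * x))) t := by
  have hlin : HasDerivAt (fun s => s * x) x t := by simpa using (hasDerivAt_id t).mul_const x
  have hlog₁ : HasDerivAt (fun s => log (1 + s * x)) (x / (1 + t * x)) t :=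
    (hlin.const_add 1).log hxt.ne'
  have hlog₂ : HasDerivAt (fun s => log (1 - s)) (-1 / (1 - t)) t := by
    simpa using ((hasDerivAt_id t).const_sub 1).log (sub_pos.2 ht).ne'
  have h : HasDerivAt (logGap x) (x / (1 + t * x) - x - x ^ 2 * (1 + -1 / (1 - t))) t :=
    (hlog₁.sub hlin).sub (((hasDerivAt_id t).add hlog₂).const_mul (x ^ 2))
  convert h using 1
  field_simp [(sub_pos.2 ht).ne']
  ring

lemma monotoneOn_logGap {x : ℝ} (hx : -1 ≤ x) : MonotoneOn (logGap x) (Ico 0 1) := by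
  have hderiv : ∀ t ∈ Ico (0 : ℝ) 1, HasDerivAt (logGap x)
      (t ^ 2 * x ^ 2 * (1 + x) / ((1 - t) * (1 + t * x))) t :=
    fun t ht => hasDerivAt_logGap (one_add_mul_pos ht hx) ht.2
  refine monotoneOn_of_hasDerivWithinAt_nonneg (convex_Ico 0 1)
    (fun t ht => (hderiv t ht).continuousAt.continuousWithinAt)
    (fun t ht => (hderiv t (interior_subset ht)).hasDerivWithinAt) fun t ht => ?_
  have ht' : t ∈ Ico (0 : ℝ) 1 := interior_subset ht
  have h₁ : 0 < 1 + t * x := one_add_mul_pos ht' hx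
  have h₂ : 0 < 1 - t := sub_pos.2 ht'.2
  have h₃ : 0 ≤ 1 + x := neg_le_iff_add_nonneg'.1 hx
  positivity

lemma logGap_nonneg {x t : ℝ} (ht : t ∈ Ico (0 : ℝ) 1) (hx : -1 ≤ x) : 0 ≤ logGap x t := by
  simpa [logGap] using monotoneOn_logGap hx ⟨le_rfl, one_pos⟩ ht ht.1

theorem exp_ineq_fgl (l x : ℝ) (hl0 : 0 ≤ l) (hl1 : l < 1) (hx : -1 ≤ x) :
    Real.exp (l * x + x ^ 2 * (l + Real.log (1 - l))) ≤ 1 + l * x := by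
  have hl : l ∈ Ico (0 : ℝ) 1 := ⟨hl0, hl1⟩
  have hgap := logGap_nonneg hl hx
  rw [logGap] at hgap
  calc Real.exp (l * x + x ^ 2 * (l + Real.log (1 - l)))
      ≤ Real.exp (Real.log (1 + l * x)) := Real.exp_le_exp.2 (by linarith)
    _ = 1 + l * x := Real.exp_log (one_add_mul_pos hl hx)
end

section
/- For all real x, |exp(x - x²/2) - 1 - x| ≤ x²/2. -/
open Real

/-- Since `x - x ^ 2 / 2 ≤ 2 * x / (x + 2)` on `[0, ∞)`, this follows from the Padé-type bound
`2 * x / (x + 2) ≤ log (1 + x)`. -/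
lemma Real.exp_sub_sq_div_two_le_one_add {x : ℝ} (hx : 0 ≤ x) :
    exp (x - x ^ 2 / 2) ≤ 1 + x := by
  have h_pade : x - x ^ 2 / 2 ≤ 2 * x / (x + 2) := by
    rw [le_div_iff₀ (by linarith)]
    nlinarith [pow_nonneg hx 3]
  rw [← le_log_iff_exp_le (by linarith)]
  exact h_pade.trans (le_log_one_add_of_nonneg hx)

/-- Apply the quadratic lower bound to `exp (-x)`, and use
`(1 + x + x ^ 2 / 2) * (1 - x + x ^ 2 / 2) = 1 + x ^ 4 / 4 ≥ 1`. -/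
lemma Real.exp_le_quadratic_of_nonpos {x : ℝ} (hx : x ≤ 0) : exp x ≤ 1 + x + x ^ 2 / 2 := by
  have h_neg : 1 + -x + (-x) ^ 2 / 2 ≤ exp (-x) := quadratic_le_exp_of_nonneg (by linarith)
  have h_inv : exp x * exp (-x) = 1 := by rw [← exp_add, add_neg_cancel, exp_zero]
  nlinarith [exp_pos x, sq_nonneg (x + 1), pow_nonneg (sq_nonneg x) 2]

lemma Real.exp_sub_sq_div_two_le_quadratic (x : ℝ) :
    exp (x - x ^ 2 / 2) ≤ 1 + x + x ^ 2 / 2 := by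
  rcases le_total 0 x with hx | hx
  · linarith [exp_sub_sq_div_two_le_one_add hx, sq_nonneg x]
  · calc exp (x - x ^ 2 / 2) ≤ exp x := exp_le_exp.mpr (by linarith [sq_nonneg x])
      _ ≤ 1 + x + x ^ 2 / 2 := exp_le_quadratic_of_nonpos hx

theorem abs_exp_sub_le (x : ℝ) :
    |Real.exp (x - x ^ 2 / 2) - 1 - x| ≤ x ^ 2 / 2 := by
  rw [abs_le]
  constructor
  · linarith [add_one_le_exp (x - x ^ 2 / 2)]
  · linarith [exp_sub_sq_div_two_le_quadratic x]
end

section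
/- For x > 0 and v > 0, the infimum over λ ∈ [0,1) of exp(-λx - (λ + log(1-λ)) v²) equals ((v² + x)/v²)^{v²} · e^{-x}, attained at λ = x/(v² + x). -/
/-! Substituting `t = (1 - λ)(v² + x)/v²`, the bound `log t ≤ t - 1` is exactly the claimed lower
bound on the exponent, with equality iff `t = 1`, i.e. `λ = x/(v² + x)`. -/

open Real

theorem neg_add_mul_log_div_le {a x l : ℝ} (ha : 0 < a) (hax : 0 < a + x) (hl : l < 1) :
    -x + a * log ((a + x) / a) ≤ -l * x - (l + log (1 - l)) * a := by
  have hr : 0 < (a + x) / a := div_pos hax ha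
  have hlog := log_le_sub_one_of_pos (mul_pos (sub_pos.mpr hl) hr)
  rw [log_mul (sub_pos.mpr hl).ne' hr.ne'] at hlog
  have hscaled := mul_le_mul_of_nonneg_left hlog ha.le
  have hcancel : a * ((1 - l) * ((a + x) / a) - 1) = (1 - l) * (a + x) - a := by
    field_simp
  linarith

theorem neg_div_mul_sub_add_log_one_sub_div {a x : ℝ} (ha : 0 < a) (hax : 0 < a + x) :
    -(x / (a + x)) * x - (x / (a + x) + log (1 - x / (a + x))) * a
      = -x + a * log ((a + x) / a) := by
  have hcompl : 1 - x / (a + x) = a / (a + x) := by field_simp; ring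
  rw [hcompl, log_div ha.ne' hax.ne', log_div hax.ne' ha.ne']
  field_simp
  ring

theorem rpow_mul_exp_neg {r a x : ℝ} (hr : 0 < r) :
    r ^ a * exp (-x) = exp (-x + a * log r) := by
  rw [rpow_def_of_pos hr, ← exp_add, mul_comm (log r)]
  ring_nf

theorem inf_attained_poisson (x v : ℝ) (hx : 0 < x) (hv : 0 < v) :
    IsLeast
      {y : ℝ | ∃ l, 0 ≤ l ∧ l < 1 ∧
        y = Real.exp (-l * x - (l + Real.log (1 - l)) * v ^ 2)}
      (((v ^ 2 + x) / v ^ 2) ^ (v ^ 2) * Real.exp (-x)) ∧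
    Real.exp (-(x / (v ^ 2 + x)) * x
        - (x / (v ^ 2 + x) + Real.log (1 - x / (v ^ 2 + x))) * v ^ 2)
      = ((v ^ 2 + x) / v ^ 2) ^ (v ^ 2) * Real.exp (-x) := by
  have hv2 : 0 < v ^ 2 := by positivity
  have hsum : 0 < v ^ 2 + x := by linarith
  rw [rpow_mul_exp_neg (div_pos hsum hv2)]
  have hopt := neg_div_mul_sub_add_log_one_sub_div hv2 hsum
  refine ⟨⟨⟨x / (v ^ 2 + x), by positivity, (div_lt_one hsum).mpr (by linarith), by rw [hopt]⟩,
    ?_⟩, by rw [hopt]⟩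
  rintro y ⟨l, -, hl, rfl⟩
  exact exp_le_exp.mpr (neg_add_mul_log_div_le hv2 hsum hl)
end

section
/- Let (S_n)_{n≥0} be a square integrable martingale adapted to a filtration (F_n) with S_0 = 0, which is conditionally symmetric: for each n ≥ 1, the conditional law of S_n - S_{n-1} given F_{n-1} equals the conditional law of -(S_n - S_{n-1}) given F_{n-1}. Then for all x > 0 and y > 0, P(S_n ≥ x and Σ_{i=1}^n (S_i - S_{i-1})² ≤ y) ≤ exp(-x²/(2y)). -/
open MeasureTheory Finset

/-!
Put `λ = x / y` and `f u = exp (λ u - λ² u² / 2)`. Since `cosh t ≤ exp (t² / 2)`, we have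
`f u + f (-u) ≤ 2`, so by conditional symmetry each factor `f (S (i+1) - S i)` has conditional
expectation at most `1` given `F i`. Hence `M n = ∏ f (S (i+1) - S i) = exp (λ S n - λ² [S] n / 2)`
has expectation at most `1`. On the event `{x ≤ S n, [S] n ≤ y}` we have
`M n ≥ exp (x² / (2 y))`, and Markov's inequality concludes.
-/

noncomputable def selfNormalizedExp (l u : ℝ) : ℝ := Real.exp (l * u - l ^ 2 * u ^ 2 / 2)

namespace selfNormalizedExp

lemma continuous (l : ℝ) : Continuous (selfNormalizedExp l) := by
  unfold selfNormalizedExp; fun_prop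

lemma pos (l u : ℝ) : 0 < selfNormalizedExp l u := Real.exp_pos _

lemma le_exp_half (l u : ℝ) : selfNormalizedExp l u ≤ Real.exp (1 / 2) :=
  Real.exp_le_exp.2 <| by nlinarith [sq_nonneg (l * u - 1)]

lemma abs_le_exp_half (l u : ℝ) : |selfNormalizedExp l u| ≤ Real.exp (1 / 2) := by
  rw [abs_of_pos (pos l u)]; exact le_exp_half l u

lemma add_neg_le_two (l u : ℝ) : selfNormalizedExp l u + selfNormalizedExp l (-u) ≤ 2 := by
  calc selfNormalizedExp l u + selfNormalizedExp l (-u)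
      = 2 * Real.cosh (l * u) * Real.exp (-((l * u) ^ 2 / 2)) := by
        simp only [selfNormalizedExp, Real.cosh_eq]; ring_nf; rw [← Real.exp_add, ← Real.exp_add]
    _ ≤ 2 * Real.exp ((l * u) ^ 2 / 2) * Real.exp (-((l * u) ^ 2 / 2)) := by
      gcongr; exact Real.cosh_le_exp_half_sq _
    _ = 2 := by rw [mul_assoc, ← Real.exp_add, add_neg_cancel, Real.exp_zero, mul_one]

lemma prod_eq_exp (l : ℝ) (d : ℕ → ℝ) (s : Finset ℕ) :
    ∏ i ∈ s, selfNormalizedExp l (d i)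
      = Real.exp (l * ∑ i ∈ s, d i - l ^ 2 / 2 * ∑ i ∈ s, d i ^ 2) := by
  rw [mul_sum, mul_sum, ← sum_sub_distrib, Real.exp_sum]
  exact prod_congr rfl fun i _ => by rw [selfNormalizedExp]; ring_nf

lemma exp_sq_div_le_prod {s : ℕ → ℝ} (hs0 : s 0 = 0) {n : ℕ} {x y : ℝ} (hx : 0 < x)
    (hy : 0 < y) (hsx : x ≤ s n) (hqy : ∑ i ∈ range n, (s (i + 1) - s i) ^ 2 ≤ y) :
    Real.exp (x ^ 2 / (2 * y)) ≤ ∏ i ∈ range n, selfNormalizedExp (x / y) (s (i + 1) - s i) := by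
  have htel : ∑ i ∈ range n, (s (i + 1) - s i) = s n := by
    simpa [hs0] using sum_range_sub s n
  rw [prod_eq_exp, htel, Real.exp_le_exp]
  have h1 : x / y * x ≤ x / y * s n := by gcongr
  have h2 : (x / y) ^ 2 / 2 * ∑ i ∈ range n, (s (i + 1) - s i) ^ 2 ≤ (x / y) ^ 2 / 2 * y := by
    gcongr
  have h3 : x ^ 2 / (2 * y) = x / y * x - (x / y) ^ 2 / 2 * y := by field_simp; ring
  linarith

end selfNormalizedExp

lemma condExp_le_one_of_symm {Ω : Type*} {m m₀ : MeasurableSpace Ω} {μ : Measure Ω}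
    [IsFiniteMeasure μ] (hm : m ≤ m₀) {g : ℝ → ℝ} {X : Ω → ℝ} (hg : Measurable g) {C : ℝ}
    (hgC : ∀ u, |g u| ≤ C) (hg_two : ∀ u, g u + g (-u) ≤ 2) (hX : Measurable X)
    (hsymm : μ[fun ω => g (X ω) | m] =ᵐ[μ] μ[fun ω => g (-X ω) | m]) :
    μ[fun ω => g (X ω) | m] ≤ᵐ[μ] 1 := by
  have hint : ∀ Z : Ω → ℝ, Measurable Z → Integrable (fun ω => g (Z ω)) μ := fun Z hZ =>
    .of_bound (hg.comp hZ).aestronglyMeasurable C (.of_forall fun ω => hgC (Z ω))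
  have hX_int := hint X hX
  have hnegX_int := hint (fun ω => -X ω) hX.neg
  have hadd := condExp_add (m := m) hX_int hnegX_int
  have hmono := condExp_mono (m := m) (hX_int.add hnegX_int) (integrable_const 2)
    (.of_forall fun ω => hg_two (X ω))
  rw [condExp_const hm] at hmono
  filter_upwards [hsymm, hadd, hmono] with ω hsymm hadd hmono
  simp only [Pi.add_apply] at hadd hmono
  simp only [Pi.one_apply]
  linarith

lemma integrable_prod_of_nonneg_of_le {ι Ω : Type*} {m : MeasurableSpace Ω} {μ : Measure Ω}
    [IsFiniteMeasure μ] {Y : ι → Ω → ℝ} {C : ℝ} (hY : ∀ i, AEStronglyMeasurable (Y i) μ)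
    (hY_nonneg : ∀ i ω, 0 ≤ Y i ω) (hY_le : ∀ i ω, Y i ω ≤ C) (s : Finset ι) :
    Integrable (fun ω => ∏ i ∈ s, Y i ω) μ :=
  .of_bound (aestronglyMeasurable_fun_prod s fun i _ => hY i) (C ^ s.card) <| .of_forall fun ω => by
    rw [Real.norm_of_nonneg (prod_nonneg fun i _ => hY_nonneg i ω)]
    exact (prod_le_prod (fun i _ => hY_nonneg i ω) fun i _ => hY_le i ω).trans_eq (prod_const C)

lemma integral_prod_le_one_of_condExp_le_one {Ω : Type*} {m : MeasurableSpace Ω}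
    {μ : Measure Ω} [IsProbabilityMeasure μ] (F : Filtration ℕ m) {Y : ℕ → Ω → ℝ} {C : ℝ}
    (hY : ∀ i, StronglyMeasurable[F (i + 1)] (Y i)) (hY_nonneg : ∀ i ω, 0 ≤ Y i ω)
    (hY_le : ∀ i ω, Y i ω ≤ C) (hY_cond : ∀ i, μ[Y i | F i] ≤ᵐ[μ] 1) (k : ℕ) :
    ∫ ω, ∏ i ∈ range k, Y i ω ∂μ ≤ 1 := by
  set M : ℕ → Ω → ℝ := fun k ω => ∏ i ∈ range k, Y i ω
  have hY_ae (i : ℕ) : AEStronglyMeasurable (Y i) μ := ((hY i).mono (F.le _)).aestronglyMeasurable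
  have hM_int (k : ℕ) : Integrable (M k) μ :=
    integrable_prod_of_nonneg_of_le hY_ae hY_nonneg hY_le _
  have hM_meas (k : ℕ) : StronglyMeasurable[F k] (M k) :=
    stronglyMeasurable_fun_prod _ fun i hi => (hY i).mono (F.mono (mem_range.1 hi))
  induction k with
  | zero => simp
  | succ k ih =>
    have hstep : M (k + 1) = M k * Y k := funext fun ω => prod_range_succ _ _
    have hpull : μ[M k * Y k | F k] =ᵐ[μ] M k * μ[Y k | F k] :=
      condExp_mul_of_stronglyMeasurable_left (hM_meas k) (hstep ▸ hM_int (k + 1))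
        (.of_bound (hY_ae k) C (.of_forall fun ω => by
          rw [Real.norm_of_nonneg (hY_nonneg k ω)]; exact hY_le k ω))
    calc ∫ ω, M (k + 1) ω ∂μ = ∫ ω, (μ[M k * Y k | F k]) ω ∂μ := by
          rw [hstep, integral_condExp (F.le k)]
      _ = ∫ ω, M k ω * (μ[Y k | F k]) ω ∂μ := integral_congr_ae hpull
      _ ≤ ∫ ω, M k ω ∂μ := by
          refine integral_mono_ae (integrable_condExp.congr hpull) (hM_int k) ?_
          filter_upwards [hY_cond k] with ω hω
          exact mul_le_of_le_one_right (prod_nonneg fun i _ => hY_nonneg i ω) hω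
      _ ≤ 1 := ih

lemma measure_setOf_le_le_ofReal_inv {Ω : Type*} {m : MeasurableSpace Ω} {μ : Measure Ω}
    [IsFiniteMeasure μ] {f : Ω → ℝ} (hf_nonneg : 0 ≤ᵐ[μ] f) (hf_int : Integrable f μ)
    (hf_le : ∫ ω, f ω ∂μ ≤ 1) {ε : ℝ} (hε : 0 < ε) :
    μ {ω | ε ≤ f ω} ≤ ENNReal.ofReal ε⁻¹ := by
  rw [← ofReal_measureReal]
  refine ENNReal.ofReal_le_ofReal ?_
  rw [← one_div, le_div_iff₀' hε]
  exact (mul_meas_ge_le_integral_of_nonneg hf_nonneg hf_int ε).trans hf_le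

theorem de_la_pena_discrete_general
    {Ω : Type*} {m : MeasurableSpace Ω} {μ : Measure Ω} [IsProbabilityMeasure μ]
    (F : Filtration ℕ m) (S : ℕ → Ω → ℝ)
    (hmart : Martingale S F μ)
    (h0 : S 0 = 0)
    (hsymm : ∀ n, ∀ g : ℝ → ℝ, Measurable g → (∃ C, ∀ y, |g y| ≤ C) →
      μ[fun ω => g (S (n + 1) ω - S n ω) | F n]
        =ᵐ[μ] μ[fun ω => g (-(S (n + 1) ω - S n ω)) | F n])
    (n : ℕ) (x y : ℝ) (hx : 0 < x) (hy : 0 < y) :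
    μ {ω | x ≤ S n ω ∧ ∑ i ∈ range n, (S (i + 1) ω - S i ω) ^ 2 ≤ y}
      ≤ ENNReal.ofReal (Real.exp (-x ^ 2 / (2 * y))) := by
  set f := selfNormalizedExp (x / y)
  set Y : ℕ → Ω → ℝ := fun i ω => f (S (i + 1) ω - S i ω)
  have hD_meas (i : ℕ) : StronglyMeasurable[F (i + 1)] (fun ω => S (i + 1) ω - S i ω) :=
    (hmart.stronglyAdapted (i + 1)).sub ((hmart.stronglyAdapted i).mono (F.mono i.le_succ))
  have hY_meas (i : ℕ) : StronglyMeasurable[F (i + 1)] (Y i) :=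
    (selfNormalizedExp.continuous _).comp_stronglyMeasurable (hD_meas i)
  have hY_nonneg (i : ℕ) (ω : Ω) : 0 ≤ Y i ω := (selfNormalizedExp.pos _ _).le
  have hY_le (i : ℕ) (ω : Ω) : Y i ω ≤ Real.exp (1 / 2) := selfNormalizedExp.le_exp_half _ _
  have hY_cond (i : ℕ) : μ[Y i | F i] ≤ᵐ[μ] 1 :=
    condExp_le_one_of_symm (F.le i) (selfNormalizedExp.continuous _).measurable
      (selfNormalizedExp.abs_le_exp_half _) (selfNormalizedExp.add_neg_le_two _)
      ((hD_meas i).mono (F.le _)).measurable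
      (hsymm i f (selfNormalizedExp.continuous _).measurable
        ⟨_, selfNormalizedExp.abs_le_exp_half _⟩)
  calc _ ≤ μ {ω | Real.exp (x ^ 2 / (2 * y)) ≤ ∏ i ∈ range n, Y i ω} :=
        measure_mono fun ω (hω : x ≤ S n ω ∧ _) =>
          selfNormalizedExp.exp_sq_div_le_prod (s := (S · ω)) (by simp [h0]) hx hy hω.1 hω.2
    _ ≤ ENNReal.ofReal (Real.exp (x ^ 2 / (2 * y)))⁻¹ :=
      measure_setOf_le_le_ofReal_inv (.of_forall fun ω => prod_nonneg fun i _ => hY_nonneg i ω)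
        (integrable_prod_of_nonneg_of_le
          (fun i => ((hY_meas i).mono (F.le _)).aestronglyMeasurable) hY_nonneg hY_le _)
        (integral_prod_le_one_of_condExp_le_one F hY_meas hY_nonneg hY_le hY_cond n)
        (Real.exp_pos _)
    _ = ENNReal.ofReal (Real.exp (-x ^ 2 / (2 * y))) := by rw [← Real.exp_neg, neg_div]

theorem de_la_pena_discrete
    {Ω : Type*} {m : MeasurableSpace Ω} {μ : Measure Ω} [IsProbabilityMeasure μ]
    (F : Filtration ℕ m) (S : ℕ → Ω → ℝ)
    (hmart : Martingale S F μ)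
    (hL2 : ∀ n, MemLp (S n) 2 μ)
    (h0 : S 0 = 0)
    (hsymm : ∀ n, ∀ g : ℝ → ℝ, Measurable g → (∃ C, ∀ y, |g y| ≤ C) →
      μ[fun ω => g (S (n + 1) ω - S n ω) | F n]
        =ᵐ[μ] μ[fun ω => g (-(S (n + 1) ω - S n ω)) | F n])
    (n : ℕ) (x y : ℝ) (hx : 0 < x) (hy : 0 < y) :
    μ {ω | x ≤ S n ω ∧ ∑ i ∈ range n, (S (i + 1) ω - S i ω) ^ 2 ≤ y}
      ≤ ENNReal.ofReal (Real.exp (-x ^ 2 / (2 * y))) :=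
  de_la_pena_discrete_general F S hmart h0 hsymm n x y hx hy
end

section
/- Let ξ be a real random variable with conditional law given a σ-field G that is symmetric, i.e. the conditional distribution of ξ given G equals that of -ξ. Then for every λ ∈ ℝ, E[exp(λξ - (λ²/2)ξ²) | G] ≤ 1 almost surely. -/
open MeasureTheory

theorem condexp_exp_le_one_of_cond_symm
    {Ω : Type*} {G : MeasurableSpace Ω} {m : MeasurableSpace Ω} {μ : Measure Ω} [IsProbabilityMeasure μ]
    (hG : G ≤ m)
    (ξ : Ω → ℝ) (hξ : Measurable ξ)
    (hsymm : ∀ g : ℝ → ℝ, Measurable g → (∃ C, ∀ y, |g y| ≤ C) →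
      μ[fun ω => g (ξ ω) | G] =ᵐ[μ] μ[fun ω => g (-ξ ω) | G])
    (l : ℝ) :
    ∀ᵐ ω ∂μ, (μ[fun ω => Real.exp (l * ξ ω - l ^ 2 / 2 * (ξ ω) ^ 2) | G]) ω ≤ 1 := by
  set g : ℝ → ℝ := fun x => Real.exp (l * x - l ^ 2 / 2 * x ^ 2) with hg
  have hgmeas : Measurable g := Real.measurable_exp.comp ((measurable_const.mul measurable_id).sub (measurable_const.mul (measurable_id.pow measurable_const)))
  have hgbd : ∀ y, |g y| ≤ Real.exp (1/2) := by
    intro y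
    rw [abs_of_pos (Real.exp_pos _)]
    apply Real.exp_le_exp.2
    nlinarith [sq_nonneg (l * y - 1)]
  have hbF : ∀ y, g y ≤ Real.exp (1/2) := fun y => (abs_le.1 (hgbd y)).2
  have hsy := hsymm g hgmeas ⟨Real.exp (1/2), hgbd⟩
  -- Integrability
  have hint : ∀ (f : Ω → ℝ), Measurable[m] f → (∀ ω, |f ω| ≤ Real.exp (1/2)) →
      Integrable f μ := by
    intro f hf hb
    exact (integrable_const (Real.exp (1/2))).mono' (hf.aestronglyMeasurable (μ := μ))
      (Filter.Eventually.of_forall fun ω => by simpa [Real.norm_eq_abs] using hb ω)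
  have hF : Integrable (fun ω => g (ξ ω)) μ := hint _ (hgmeas.comp hξ) fun ω => hgbd _
  have hF' : Integrable (fun ω => g (-ξ ω)) μ :=
    hint _ (hgmeas.comp hξ.neg) fun ω => hgbd _
  -- key pointwise bound: g(x) + g(-x) ≤ 2
  have hpt : ∀ x : ℝ, g x + g (-x) ≤ 2 := by
    intro x
    have h1 : g x + g (-x) = 2 * Real.cosh (l * x) * Real.exp (-(l ^ 2 / 2 * x ^ 2)) := by
      rw [Real.cosh_eq]
      simp only [hg]
      rw [show l * x - l ^ 2 / 2 * x ^ 2 = l * x + -(l ^ 2 / 2 * x ^ 2) by ring,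
        show l * -x - l ^ 2 / 2 * (-x) ^ 2 = -(l * x) + -(l ^ 2 / 2 * x ^ 2) by ring,
        Real.exp_add, Real.exp_add]
      ring
    rw [h1]
    have h2 : Real.cosh (l * x) ≤ Real.exp ((l * x) ^ 2 / 2) := Real.cosh_le_exp_half_sq _
    have h3 : 2 * Real.cosh (l * x) * Real.exp (-(l ^ 2 / 2 * x ^ 2))
        ≤ 2 * Real.exp ((l * x) ^ 2 / 2) * Real.exp (-(l ^ 2 / 2 * x ^ 2)) := by
      have := Real.exp_pos (-(l ^ 2 / 2 * x ^ 2))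
      nlinarith
    refine h3.trans ?_
    rw [mul_assoc, ← Real.exp_add]
    have : (l * x) ^ 2 / 2 + -(l ^ 2 / 2 * x ^ 2) = 0 := by ring
    rw [this, Real.exp_zero, mul_one]
  -- combine
  have hsum := condExp_add (m := G) hF hF' (μ := μ)
  have hmono : μ[(fun ω => g (ξ ω)) + fun ω => g (-ξ ω) | G] ≤ᵐ[μ]
      μ[(fun _ : Ω => (2 : ℝ)) | G] :=
    condExp_mono (hF.add hF') (integrable_const 2)
      (Filter.Eventually.of_forall fun ω => hpt (ξ ω))
  have hconst : μ[(fun _ : Ω => (2 : ℝ)) | G] = fun _ => (2 : ℝ) := condExp_const hG 2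
  filter_upwards [hsy, hsum, hmono] with ω h1 h2 h3
  rw [hconst] at h3
  simp only [Pi.add_apply] at h2
  have : (μ[fun ω => g (ξ ω) | G]) ω + (μ[fun ω => g (-ξ ω) | G]) ω ≤ 2 := h2 ▸ h3
  rw [← h1] at this
  have hfin : (μ[fun ω => g (ξ ω) | G]) ω ≤ 1 := by linarith
  exact hfin
end

section
/- Let ξ be an integrable real random variable with E[ξ] = 0 such that E[min(|ξ|, a)·sign(ξ)] ≤ 0 for every a > 0 (i.e., ξ is heavy on left). Then for every λ ≥ 0, E[exp(λξ - (λ²/2)ξ²)] ≤ 1. -/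
/-!
Write `φ(t) = exp (-λt - λ²t²/2)`. For `x < 0` the integrand equals `φ(|x|)`, and for `x > 0`
the bound `cosh a ≤ exp (a²/2)` gives `exp (λx - λ²x²/2) ≤ 2 - φ(x)`; so the integrand is at most
`1 + sign ξ · (1 - φ(|ξ|))`. Since `φ'` vanishes at infinity, integrating by parts twice gives
`1 - φ(t) = ∫₀^∞ min(t, s) φ''(s) ds`, where `φ'' ≥ 0` on `[0, ∞)`. Hence `sign x · (1 - φ(|x|))`
is a mixture, with nonnegative weights, of the clippings `min(|x|, s) · sign x` of `x` at the levels
`s > 0`, whose means are nonpositive by hypothesis; Fubini's theorem concludes.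
-/

open MeasureTheory

open Real Set Filter Topology

noncomputable def expNegQuad (l s : ℝ) : ℝ := exp (-(l * s) - l ^ 2 / 2 * s ^ 2)

-- the second derivative of `expNegQuad l`
noncomputable def clipWeight (l s : ℝ) : ℝ := ((l + l ^ 2 * s) ^ 2 - l ^ 2) * expNegQuad l s

section ExpNegQuad

variable {l : ℝ}

@[fun_prop]
lemma continuous_expNegQuad (l : ℝ) : Continuous (expNegQuad l) := by
  unfold expNegQuad; fun_prop

@[fun_prop]
lemma continuous_clipWeight (l : ℝ) : Continuous (clipWeight l) := by
  unfold clipWeight; fun_prop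

lemma expNegQuad_zero (l : ℝ) : expNegQuad l 0 = 1 := by simp [expNegQuad]

lemma hasDerivAt_expNegQuad (l s : ℝ) :
    HasDerivAt (expNegQuad l) (-(l + l ^ 2 * s) * expNegQuad l s) s := by
  have h : HasDerivAt (fun s => -(l * s) - l ^ 2 / 2 * s ^ 2) (-(l + l ^ 2 * s)) s :=
    (((hasDerivAt_id s).const_mul l).neg.sub
      ((hasDerivAt_pow 2 s).const_mul (l ^ 2 / 2))).congr_deriv (by simp; ring)
  exact h.exp.congr_deriv (mul_comm _ _)

lemma hasDerivAt_neg_linear_mul_expNegQuad (l s : ℝ) :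
    HasDerivAt (fun s => -((l + l ^ 2 * s) * expNegQuad l s)) (clipWeight l s) s :=
  ((((hasDerivAt_id s).const_mul (l ^ 2)).const_add l).mul
    (hasDerivAt_expNegQuad l s)).neg.congr_deriv (by simp only [clipWeight, id]; ring)

lemma hasDerivAt_neg_quadratic_mul_expNegQuad (l s : ℝ) :
    HasDerivAt (fun s => -((s * (l + l ^ 2 * s) + 1) * expNegQuad l s))
      (s * clipWeight l s) s :=
  (((((hasDerivAt_id s).mul (((hasDerivAt_id s).const_mul (l ^ 2)).const_add l)).add_const
    1).mul (hasDerivAt_expNegQuad l s)).neg).congr_deriv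
    (by simp only [clipWeight, Pi.mul_apply, id]; ring)

lemma clipWeight_nonneg (hl : 0 ≤ l) {s : ℝ} (hs : 0 ≤ s) : 0 ≤ clipWeight l s := by
  have : l ^ 2 ≤ (l + l ^ 2 * s) ^ 2 := pow_le_pow_left₀ hl (by nlinarith) 2
  exact mul_nonneg (by linarith) (exp_pos _).le

lemma tendsto_pow_mul_expNegQuad_atTop (hl : 0 < l) (k : ℕ) :
    Tendsto (fun s => s ^ k * expNegQuad l s) atTop (𝓝 0) := by
  have h : Tendsto (fun s => (l ^ k)⁻¹ * ((l * s) ^ k * exp (-(l * s)))) atTop (𝓝 0) := by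
    simpa using ((tendsto_pow_mul_exp_neg_atTop_nhds_zero k).comp
      (tendsto_id.const_mul_atTop hl)).const_mul (l ^ k)⁻¹
  refine squeeze_zero' ?_ ?_ h
  · filter_upwards [eventually_ge_atTop 0] with s hs
    exact mul_nonneg (pow_nonneg hs k) (exp_pos _).le
  · filter_upwards [eventually_ge_atTop 0] with s hs
    rw [mul_pow, ← mul_assoc, ← mul_assoc, inv_mul_cancel₀ (pow_pos hl k).ne', one_mul]
    gcongr
    exact exp_le_exp.2 (by nlinarith)

lemma tendsto_neg_linear_mul_expNegQuad_atTop (hl : 0 < l) :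
    Tendsto (fun s => -((l + l ^ 2 * s) * expNegQuad l s)) atTop (𝓝 0) := by
  have := ((tendsto_pow_mul_expNegQuad_atTop hl 0).const_mul l).add
    ((tendsto_pow_mul_expNegQuad_atTop hl 1).const_mul (l ^ 2))
  simpa using this.neg.congr fun s => by ring

lemma tendsto_neg_quadratic_mul_expNegQuad_atTop (hl : 0 < l) :
    Tendsto (fun s => -((s * (l + l ^ 2 * s) + 1) * expNegQuad l s)) atTop (𝓝 0) := by
  have := (((tendsto_pow_mul_expNegQuad_atTop hl 1).const_mul l).add
    ((tendsto_pow_mul_expNegQuad_atTop hl 2).const_mul (l ^ 2))).add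
    (tendsto_pow_mul_expNegQuad_atTop hl 0)
  simpa using this.neg.congr fun s => by ring

lemma integral_clipWeight_Ioi (hl : 0 < l) {t : ℝ} (ht : 0 ≤ t) :
    ∫ s in Ioi t, clipWeight l s = (l + l ^ 2 * t) * expNegQuad l t := by
  rw [integral_Ioi_of_hasDerivAt_of_nonneg' (fun s _ => hasDerivAt_neg_linear_mul_expNegQuad l s)
    (fun s hs => clipWeight_nonneg hl.le (ht.trans hs.out.le))
    (tendsto_neg_linear_mul_expNegQuad_atTop hl)]
  ring

lemma integrableOn_mul_clipWeight_Ioi (hl : 0 < l) :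
    IntegrableOn (fun s => s * clipWeight l s) (Ioi 0) :=
  integrableOn_Ioi_deriv_of_nonneg' (fun s _ => hasDerivAt_neg_quadratic_mul_expNegQuad l s)
    (fun _ hs => mul_nonneg hs.out.le (clipWeight_nonneg hl.le hs.out.le))
    (tendsto_neg_quadratic_mul_expNegQuad_atTop hl)

lemma integral_mul_clipWeight_Ioc (l : ℝ) {t : ℝ} (ht : 0 ≤ t) :
    ∫ s in Ioc 0 t, s * clipWeight l s = 1 - (t * (l + l ^ 2 * t) + 1) * expNegQuad l t := by
  rw [← intervalIntegral.integral_of_le ht, intervalIntegral.integral_eq_sub_of_hasDerivAt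
    (fun s _ => hasDerivAt_neg_quadratic_mul_expNegQuad l s)
    ((continuous_id.mul (continuous_clipWeight l)).intervalIntegrable _ _), expNegQuad_zero]
  ring

lemma abs_min_le_abs_right {t : ℝ} (ht : 0 ≤ t) (s : ℝ) : |min t s| ≤ |s| :=
  abs_le.2 ⟨le_min (by linarith [abs_nonneg s]) (neg_abs_le s),
    (min_le_right t s).trans (le_abs_self s)⟩

lemma integral_min_mul_clipWeight (hl : 0 < l) {t : ℝ} (ht : 0 ≤ t) :
    ∫ s in Ioi 0, min t s * clipWeight l s = 1 - expNegQuad l t := by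
  have hint : IntegrableOn (fun s => min t s * clipWeight l s) (Ioi 0) :=
    Integrable.mono (integrableOn_mul_clipWeight_Ioi hl)
      (by fun_prop : Continuous fun s => min t s * clipWeight l s).aestronglyMeasurable
      (ae_of_all _ fun s => by
        simp only [norm_mul, Real.norm_eq_abs]
        exact mul_le_mul_of_nonneg_right (abs_min_le_abs_right ht s) (abs_nonneg _))
  have hIoc : ∫ s in Ioc 0 t, min t s * clipWeight l s = ∫ s in Ioc 0 t, s * clipWeight l s :=
    setIntegral_congr_fun measurableSet_Ioc fun s hs => by rw [min_eq_right hs.2]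
  have hIoi : ∫ s in Ioi t, min t s * clipWeight l s = ∫ s in Ioi t, t * clipWeight l s :=
    setIntegral_congr_fun measurableSet_Ioi fun s hs => by rw [min_eq_left hs.out.le]
  rw [← Ioc_union_Ioi_eq_Ioi ht, setIntegral_union (Ioc_disjoint_Ioi le_rfl) measurableSet_Ioi
    (hint.mono_set Ioc_subset_Ioi_self) (hint.mono_set (Ioi_subset_Ioi ht)), hIoc, hIoi,
    integral_mul_clipWeight_Ioc l ht, integral_const_mul, integral_clipWeight_Ioi hl ht]
  ring

lemma sign_mul_one_sub_expNegQuad_abs (hl : 0 < l) (x : ℝ) :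
    Real.sign x * (1 - expNegQuad l |x|) =
      ∫ s in Ioi 0, min |x| s * Real.sign x * clipWeight l s := by
  simp_rw [mul_right_comm _ (Real.sign x), integral_mul_const,
    integral_min_mul_clipWeight hl (abs_nonneg x), mul_comm]

lemma exp_sub_add_exp_neg_sub_le_two (a : ℝ) : exp (a - a ^ 2 / 2) + exp (-a - a ^ 2 / 2) ≤ 2 :=
  calc exp (a - a ^ 2 / 2) + exp (-a - a ^ 2 / 2)
      = 2 * ((exp a + exp (-a)) / 2) * exp (-(a ^ 2 / 2)) := by
        rw [sub_eq_add_neg, sub_eq_add_neg, exp_add, exp_add]; ring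
    _ ≤ 2 * exp (a ^ 2 / 2) * exp (-(a ^ 2 / 2)) := by
        gcongr; rw [← cosh_eq]; exact cosh_le_exp_half_sq a
    _ = 2 := by rw [mul_assoc, ← exp_add, add_neg_cancel, exp_zero, mul_one]

lemma exp_le_one_add_sign_mul_one_sub_expNegQuad_abs (l x : ℝ) :
    exp (l * x - l ^ 2 / 2 * x ^ 2) ≤ 1 + Real.sign x * (1 - expNegQuad l |x|) := by
  rcases lt_trichotomy x 0 with hx | rfl | hx
  · rw [Real.sign_of_neg hx, abs_of_neg hx, expNegQuad]
    exact le_of_eq (by ring_nf)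
  · simp [expNegQuad]
  · rw [Real.sign_of_pos hx, abs_of_pos hx, expNegQuad]
    have := exp_sub_add_exp_neg_sub_le_two (l * x)
    ring_nf at this ⊢
    linarith

end ExpNegQuad

lemma Real.measurable_sign : Measurable Real.sign :=
  Measurable.ite measurableSet_Iio measurable_const
    (Measurable.ite measurableSet_Ioi measurable_const measurable_const)

lemma abs_min_abs_mul_sign_le_abs (x s : ℝ) : |min |x| s * Real.sign x| ≤ |s| := by
  have hsign : |Real.sign x| ≤ 1 := by
    rcases Real.sign_apply_eq x with h | h | h <;> simp [h]
  rw [abs_mul, ← mul_one |s|]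
  exact mul_le_mul (abs_min_le_abs_right (abs_nonneg x) s) hsign (abs_nonneg _) (abs_nonneg _)

section Clip

variable {Ω : Type*} {m : MeasurableSpace Ω} {μ : Measure Ω} [IsFiniteMeasure μ] {ξ : Ω → ℝ}
  {w : ℝ → ℝ}

lemma integrable_min_abs_mul_sign_mul_prod (hξ : Measurable ξ) (hw : Measurable w)
    (hsw : IntegrableOn (fun s => s * w s) (Ioi 0)) :
    Integrable (fun p : Ω × ℝ => min |ξ p.1| p.2 * Real.sign (ξ p.1) * w p.2)
      (μ.prod (volume.restrict (Ioi 0))) := by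
  refine ((integrable_const (1 : ℝ)).mul_prod hsw).mono ?_ (ae_of_all _ fun p => ?_)
  · exact ((((hξ.comp measurable_fst).abs.min measurable_snd).mul
      (Real.measurable_sign.comp (hξ.comp measurable_fst))).mul
      (hw.comp measurable_snd)).aestronglyMeasurable
  · simpa only [norm_mul, norm_one, one_mul, Real.norm_eq_abs, abs_mul] using
      mul_le_mul_of_nonneg_right (abs_min_abs_mul_sign_le_abs (ξ p.1) p.2) (abs_nonneg (w p.2))

lemma integral_integral_min_abs_mul_sign_mul_nonpos (hξ : Measurable ξ) (hw : Measurable w)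
    (hw_nonneg : ∀ s > 0, 0 ≤ w s) (hsw : IntegrableOn (fun s => s * w s) (Ioi 0))
    (hheavy : ∀ a > 0, ∫ ω, min |ξ ω| a * Real.sign (ξ ω) ∂μ ≤ 0) :
    ∫ ω, (∫ s in Ioi 0, min |ξ ω| s * Real.sign (ξ ω) * w s) ∂μ ≤ 0 := by
  rw [integral_integral_swap (integrable_min_abs_mul_sign_mul_prod hξ hw hsw)]
  refine setIntegral_nonpos measurableSet_Ioi fun s hs => ?_
  rw [integral_mul_const]
  exact mul_nonpos_of_nonpos_of_nonneg (hheavy s hs) (hw_nonneg s hs)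

end Clip

theorem integral_exp_le_one_of_heavy_on_left_general
    {Ω : Type*} {m : MeasurableSpace Ω} {μ : Measure Ω} [IsProbabilityMeasure μ]
    (ξ : Ω → ℝ) (hξ : Measurable ξ)
    (hheavy : ∀ a > 0, ∫ ω, min |ξ ω| a * Real.sign (ξ ω) ∂μ ≤ 0)
    (l : ℝ) (hl : 0 ≤ l) :
    ∫ ω, Real.exp (l * ξ ω - l ^ 2 / 2 * (ξ ω) ^ 2) ∂μ ≤ 1 := by
  rcases hl.eq_or_lt with rfl | hl
  · simp
  have hmix (ω : Ω) := sign_mul_one_sub_expNegQuad_abs hl (ξ ω)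
  have hint : Integrable (fun ω => Real.sign (ξ ω) * (1 - expNegQuad l |ξ ω|)) μ := by
    simpa only [hmix] using (integrable_min_abs_mul_sign_mul_prod (μ := μ) hξ
      (continuous_clipWeight l).measurable (integrableOn_mul_clipWeight_Ioi hl)).integral_prod_left
  calc ∫ ω, exp (l * ξ ω - l ^ 2 / 2 * (ξ ω) ^ 2) ∂μ
      ≤ ∫ ω, 1 + Real.sign (ξ ω) * (1 - expNegQuad l |ξ ω|) ∂μ :=
        integral_mono_of_nonneg (ae_of_all _ fun _ => (exp_pos _).le)
          ((integrable_const 1).add hint)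
          (ae_of_all _ fun ω => exp_le_one_add_sign_mul_one_sub_expNegQuad_abs l (ξ ω))
    _ = 1 + ∫ ω, (∫ s in Ioi 0, min |ξ ω| s * Real.sign (ξ ω) * clipWeight l s) ∂μ := by
        rw [integral_add (integrable_const 1) hint, integral_const, probReal_univ, one_smul]
        simp_rw [hmix]
    _ ≤ 1 := by
        linarith [integral_integral_min_abs_mul_sign_mul_nonpos hξ
          (continuous_clipWeight l).measurable (fun s hs => clipWeight_nonneg hl.le hs.le)
          (integrableOn_mul_clipWeight_Ioi hl) hheavy]

theorem integral_exp_le_one_of_heavy_on_left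
    {Ω : Type*} {m : MeasurableSpace Ω} {μ : Measure Ω} [IsProbabilityMeasure μ]
    (ξ : Ω → ℝ) (hξ : Measurable ξ) (hint : Integrable ξ μ)
    (hmean : ∫ ω, ξ ω ∂μ = 0)
    (hheavy : ∀ a > 0, ∫ ω, min |ξ ω| a * Real.sign (ξ ω) ∂μ ≤ 0)
    (l : ℝ) (hl : 0 ≤ l) :
    ∫ ω, Real.exp (l * ξ ω - l ^ 2 / 2 * (ξ ω) ^ 2) ∂μ ≤ 1 :=
  integral_exp_le_one_of_heavy_on_left_general (m := m) ξ hξ hheavy l hl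
end

section
/- Let (S_n)_{n≥0} be a square integrable martingale with S_0 = 0 whose increments satisfy |S_k - S_{k-1}| ≤ c for all k ≤ n, and let ⟨S⟩_n = Σ_{i=1}^n E[(S_i - S_{i-1})² | F_{i-1}]. Then for all x > 0 and y > 0, P(S_n ≥ x and ⟨S⟩_n ≤ y) ≤ exp(-x²/(2(y + cx))). -/
open MeasureTheory ProbabilityTheory Finset Filter Real

/-! For `0 ≤ l` with `l c < 1` and `a = l² / (2 (1 - l c))`, the bound
`exp v ≤ 1 + v + v² / (2 (1 - l c))` for `|v| ≤ l c` gives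
`E[exp (l ΔS) | F] ≤ 1 + a E[ΔS² | F] ≤ exp (a E[ΔS² | F])`, so `exp (l S_k - a ⟨S⟩_k)` is a
supermartingale with mean at most `1`. It is at least `exp (l x - a y)` on the event
`{S_n ≥ x, ⟨S⟩_n ≤ y}`, and Markov's inequality with `l = x / (y + c x)` gives the bound. -/

namespace Real

theorem exp_sub_self_le_exp_abs_sub_abs (v : ℝ) : exp v - v ≤ exp |v| - |v| := by
  rcases le_or_gt 0 v with h | h
  · rw [abs_of_nonneg h]
  · rw [abs_of_neg h]
    have hs : sinh v < v := sinh_lt_self_iff.2 h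
    rw [sinh_eq] at hs
    linarith

theorem exp_le_one_add_add_sq_div_of_nonneg {w : ℝ} (h0 : 0 ≤ w) (h1 : w < 1) :
    exp w ≤ 1 + w + w ^ 2 / (2 * (1 - w)) := by
  have hb := exp_bound' h0 h1.le (n := 3) (by norm_num)
  simp only [sum_range_succ, sum_range_zero, Nat.factorial] at hb
  have htail : w ^ 2 / 2 + w ^ 3 * (2 / 9) ≤ w ^ 2 / (2 * (1 - w)) := by
    rw [le_div_iff₀ (by linarith)]
    nlinarith [pow_nonneg h0 3, pow_nonneg h0 4]
  norm_num at hb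
  linarith

theorem exp_le_one_add_add_sq_div {v r : ℝ} (hr : r < 1) (hv : |v| ≤ r) :
    exp v ≤ 1 + v + v ^ 2 / (2 * (1 - r)) := by
  have hv1 : |v| < 1 := hv.trans_lt hr
  have habs := exp_le_one_add_add_sq_div_of_nonneg (abs_nonneg v) hv1
  have hsq : |v| ^ 2 / (2 * (1 - |v|)) ≤ v ^ 2 / (2 * (1 - r)) := by
    rw [sq_abs]
    exact div_le_div_of_nonneg_left (sq_nonneg v) (by linarith) (by linarith)
  linarith [exp_sub_self_le_exp_abs_sub_abs v]

end Real

theorem abs_le_mul_of_abs_sub_le {s : ℕ → ℝ} (h0 : s 0 = 0) {c : ℝ} {k : ℕ}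
    (hs : ∀ i < k, |s (i + 1) - s i| ≤ c) : |s k| ≤ k * c := by
  have := dist_le_range_sum_of_dist_le (f := s) k (d := fun _ => c) fun hi => by
    rw [dist_comm]; exact hs _ hi
  simpa [h0, Real.dist_eq] using this

section CondExp

variable {Ω : Type*} {m m0 : MeasurableSpace Ω} {μ : Measure Ω} [IsFiniteMeasure μ]
  {D : Ω → ℝ} {c l : ℝ}

theorem integrable_exp_mul_of_abs_le (hD : AEStronglyMeasurable D μ) (hl : 0 ≤ l)
    (hDc : ∀ᵐ ω ∂μ, |D ω| ≤ c) : Integrable (fun ω => exp (l * D ω)) μ := by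
  refine .of_bound (by fun_prop) (exp (l * c)) ?_
  filter_upwards [hDc] with ω hω
  rw [norm_of_nonneg (exp_nonneg _), exp_le_exp]
  exact mul_le_mul_of_nonneg_left ((le_abs_self _).trans hω) hl

theorem condExp_exp_mul_le_one_add (hm : m ≤ m0) (hD : AEStronglyMeasurable D μ) {a : ℝ}
    (hl : 0 ≤ l) (hlc : l * c < 1) (ha : l ^ 2 / (2 * (1 - l * c)) ≤ a)
    (hDc : ∀ᵐ ω ∂μ, |D ω| ≤ c) (hD0 : μ[D | m] =ᵐ[μ] 0) :
    μ[fun ω => exp (l * D ω) | m] ≤ᵐ[μ] fun ω => 1 + a * μ[fun ω => D ω ^ 2 | m] ω := by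
  have hDint : Integrable D μ := .of_bound hD c (by simpa only [norm_eq_abs] using hDc)
  have hD2int : Integrable (fun ω => D ω ^ 2) μ := by
    refine .of_bound (hD.pow 2) (c ^ 2) ?_
    filter_upwards [hDc] with ω hω
    rw [norm_pow, norm_eq_abs]
    exact pow_le_pow_left₀ (abs_nonneg _) hω 2
  have hquad :
      (fun ω => exp (l * D ω)) ≤ᵐ[μ] (fun _ => (1 : ℝ)) + l • D + a • fun ω => D ω ^ 2 := by
    filter_upwards [hDc] with ω hω
    have hlD : |l * D ω| ≤ l * c := by
      rw [abs_mul, abs_of_nonneg hl]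
      exact mul_le_mul_of_nonneg_left hω hl
    calc exp (l * D ω) ≤ 1 + l * D ω + l ^ 2 / (2 * (1 - l * c)) * D ω ^ 2 := by
          convert exp_le_one_add_add_sq_div hlc hlD using 2
          ring
      _ ≤ 1 + l * D ω + a * D ω ^ 2 := by gcongr
  have hlin : μ[(fun _ => (1 : ℝ)) + l • D + a • fun ω => D ω ^ 2 | m]
      =ᵐ[μ] fun ω => 1 + a * μ[fun ω => D ω ^ 2 | m] ω := by
    filter_upwards [condExp_add ((integrable_const 1).add (hDint.smul l)) (hD2int.smul a) m,
      condExp_add (integrable_const 1) (hDint.smul l) m, condExp_smul l D m,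
      condExp_smul a (fun ω => D ω ^ 2) m, hD0] with ω h1 h2 h3 h4 h5
    simp only [Pi.add_apply, Pi.smul_apply, smul_eq_mul, Pi.zero_apply] at h1 h2 h3 h4 h5 ⊢
    rw [h1, h2, h3, h4, h5, condExp_const hm]
    ring
  exact (condExp_mono (integrable_exp_mul_of_abs_le hD hl hDc)
    (((integrable_const 1).add (hDint.smul l)).add (hD2int.smul a)) hquad).trans_eq hlin

end CondExp

section Freedman

variable {Ω : Type*} {m : MeasurableSpace Ω} {μ : Measure Ω} {F : Filtration ℕ m}
  {S : ℕ → Ω → ℝ}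

theorem MeasureTheory.Martingale.condExp_succ_sub_ae_eq_zero [IsFiniteMeasure μ]
    (hS : Martingale S F μ) (i : ℕ) : μ[S (i + 1) - S i | F i] =ᵐ[μ] 0 := by
  filter_upwards [condExp_sub (hS.integrable (i + 1)) (hS.integrable i) (F i),
    hS.condExp_ae_eq i.le_succ, hS.condExp_ae_eq le_rfl] with ω h1 h2 h3
  simp only [Pi.sub_apply, Pi.zero_apply] at h1 ⊢
  rw [h1, h2, h3, sub_self]

variable (μ F S) in
noncomputable def predictableQuadVar (k : ℕ) (ω : Ω) : ℝ :=
  ∑ i ∈ range k, μ[fun ω' => (S (i + 1) ω' - S i ω') ^ 2 | F i] ω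

theorem predictableQuadVar_succ (k : ℕ) (ω : Ω) :
    predictableQuadVar μ F S (k + 1) ω =
      predictableQuadVar μ F S k ω + μ[fun ω' => (S (k + 1) ω' - S k ω') ^ 2 | F k] ω :=
  sum_range_succ _ _

theorem predictableQuadVar_nonneg : ∀ᵐ ω ∂μ, ∀ k, 0 ≤ predictableQuadVar μ F S k ω := by
  have h := ae_all_iff.2 fun i => condExp_nonneg (m := F i) (μ := μ)
    (f := fun ω' => (S (i + 1) ω' - S i ω') ^ 2) (.of_forall fun _ => sq_nonneg _)
  filter_upwards [h] with ω hω k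
  exact sum_nonneg fun i _ => hω i

theorem stronglyMeasurable_predictableQuadVar {j k : ℕ} (hk : k ≤ j + 1) :
    StronglyMeasurable[F j] (predictableQuadVar μ F S k) :=
  Finset.stronglyMeasurable_fun_sum _ fun i hi =>
    stronglyMeasurable_condExp.mono (F.mono (by rw [mem_range] at hi; omega))

variable (μ F S) in
noncomputable def freedmanExpProcess (l a : ℝ) (k : ℕ) (ω : Ω) : ℝ :=
  exp (l * S k ω - a * predictableQuadVar μ F S k ω)

theorem integrable_freedmanExpProcess [IsFiniteMeasure μ] (hS : StronglyAdapted F S)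
    (h0 : S 0 = 0) {c l a : ℝ} (hl : 0 ≤ l) (ha : 0 ≤ a) {k : ℕ}
    (hinc : ∀ᵐ ω ∂μ, ∀ i < k, |S (i + 1) ω - S i ω| ≤ c) :
    Integrable (freedmanExpProcess μ F S l a k) μ := by
  have hmeas : StronglyMeasurable (freedmanExpProcess μ F S l a k) :=
    continuous_exp.comp_stronglyMeasurable (((hS k).mono (F.le k)).const_mul l |>.sub
      (((stronglyMeasurable_predictableQuadVar (j := k) k.le_succ).mono (F.le k)).const_mul a))
  refine .of_bound hmeas.aestronglyMeasurable (exp (l * (k * c))) ?_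
  filter_upwards [hinc, predictableQuadVar_nonneg (F := F) (S := S)] with ω hω hQ
  rw [freedmanExpProcess, norm_of_nonneg (exp_nonneg _), exp_le_exp]
  have hSk := abs_le_mul_of_abs_sub_le (s := fun i => S i ω) (congrFun h0 ω) hω
  nlinarith [le_abs_self (S k ω), mul_nonneg ha (hQ k), mul_le_mul_of_nonneg_left hSk hl]

theorem MeasureTheory.Martingale.condExp_freedmanExpProcess_succ_le [IsFiniteMeasure μ]
    (hS : Martingale S F μ) {c l a : ℝ} (hl : 0 ≤ l) (hlc : l * c < 1)
    (ha : l ^ 2 / (2 * (1 - l * c)) ≤ a) {k : ℕ} (hk : ∀ᵐ ω ∂μ, |S (k + 1) ω - S k ω| ≤ c)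
    (hint : Integrable (freedmanExpProcess μ F S l a (k + 1)) μ) :
    μ[freedmanExpProcess μ F S l a (k + 1) | F k] ≤ᵐ[μ] freedmanExpProcess μ F S l a k := by
  set D : Ω → ℝ := fun ω => S (k + 1) ω - S k ω
  set f : Ω → ℝ := fun ω => exp (l * S k ω - a * predictableQuadVar μ F S (k + 1) ω)
  set e : Ω → ℝ := fun ω => exp (l * D ω)
  have hfe : freedmanExpProcess μ F S l a (k + 1) = f * e := by
    ext ω
    simp only [freedmanExpProcess, f, e, D, Pi.mul_apply, ← exp_add]
    ring_nf
  have hf : StronglyMeasurable[F k] f :=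
    continuous_exp.comp_stronglyMeasurable (((hS.stronglyAdapted k).const_mul l).sub
      ((stronglyMeasurable_predictableQuadVar le_rfl).const_mul a))
  have hD : AEStronglyMeasurable D μ :=
    ((hS.integrable (k + 1)).sub (hS.integrable k)).aestronglyMeasurable
  have he := integrable_exp_mul_of_abs_le hD hl hk
  have hpull : μ[f * e | F k] =ᵐ[μ] f * μ[e | F k] :=
    condExp_mul_of_stronglyMeasurable_left hf (hfe ▸ hint) he
  rw [hfe]
  filter_upwards [hpull, condExp_exp_mul_le_one_add (F.le k) hD hl hlc ha hk
    (hS.condExp_succ_sub_ae_eq_zero k)] with ω hpull hcond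
  -- `1 + t ≤ exp t` absorbs the conditional variance of the new increment into `⟨S⟩`.
  calc (μ[f * e | F k]) ω = f ω * (μ[e | F k]) ω := hpull
    _ ≤ f ω * exp (a * μ[fun ω' => D ω' ^ 2 | F k] ω) := by
      gcongr
      exact hcond.trans (by linarith [add_one_le_exp (a * μ[fun ω' => D ω' ^ 2 | F k] ω)])
    _ = freedmanExpProcess μ F S l a k ω := by
      simp only [f, freedmanExpProcess, predictableQuadVar_succ, ← exp_add, D]
      ring_nf

theorem MeasureTheory.Martingale.integral_freedmanExpProcess_le_one [IsProbabilityMeasure μ]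
    (hS : Martingale S F μ) (h0 : S 0 = 0) {c l a : ℝ} (hl : 0 ≤ l) (hlc : l * c < 1)
    (ha : l ^ 2 / (2 * (1 - l * c)) ≤ a) {n : ℕ}
    (hinc : ∀ᵐ ω ∂μ, ∀ i < n, |S (i + 1) ω - S i ω| ≤ c) :
    ∫ ω, freedmanExpProcess μ F S l a n ω ∂μ ≤ 1 := by
  have ha0 : 0 ≤ a := le_trans (div_nonneg (sq_nonneg l) (by linarith)) ha
  induction n with
  | zero => simp [freedmanExpProcess, predictableQuadVar, h0]
  | succ k ih =>
    have hinc_k : ∀ᵐ ω ∂μ, ∀ i < k, |S (i + 1) ω - S i ω| ≤ c := by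
      filter_upwards [hinc] with ω hω i hi using hω i (by omega)
    have hint := integrable_freedmanExpProcess hS.stronglyAdapted h0 hl ha0 hinc
    calc ∫ ω, freedmanExpProcess μ F S l a (k + 1) ω ∂μ
        = ∫ ω, (μ[freedmanExpProcess μ F S l a (k + 1) | F k]) ω ∂μ :=
          (integral_condExp (F.le k)).symm
      _ ≤ ∫ ω, freedmanExpProcess μ F S l a k ω ∂μ :=
          integral_mono_ae integrable_condExp
            (integrable_freedmanExpProcess hS.stronglyAdapted h0 hl ha0 hinc_k)
            (hS.condExp_freedmanExpProcess_succ_le hl hlc ha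
              (by filter_upwards [hinc] with ω hω using hω k k.lt_succ_self) hint)
      _ ≤ 1 := ih hinc_k

theorem MeasureTheory.Martingale.measure_le_and_predictableQuadVar_le_le
    [IsProbabilityMeasure μ] (hS : Martingale S F μ) (h0 : S 0 = 0) {c l a : ℝ} (hl : 0 ≤ l)
    (hlc : l * c < 1) (ha : l ^ 2 / (2 * (1 - l * c)) ≤ a) {n : ℕ}
    (hinc : ∀ᵐ ω ∂μ, ∀ i < n, |S (i + 1) ω - S i ω| ≤ c) (x y : ℝ) :
    μ {ω | x ≤ S n ω ∧ predictableQuadVar μ F S n ω ≤ y} ≤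
      ENNReal.ofReal (exp (-(l * x - a * y))) := by
  have ha0 : 0 ≤ a := le_trans (div_nonneg (sq_nonneg l) (by linarith)) ha
  set Z : Ω → ℝ := fun ω => l * S n ω - a * predictableQuadVar μ F S n ω
  have hsub :
      {ω | x ≤ S n ω ∧ predictableQuadVar μ F S n ω ≤ y} ⊆ {ω | l * x - a * y ≤ Z ω} :=
    fun ω ⟨hx, hy⟩ => by
      simp only [Set.mem_ofPred_eq, Z]
      nlinarith [mul_le_mul_of_nonneg_left hx hl, mul_le_mul_of_nonneg_left hy ha0]
  have hint : Integrable (fun ω => exp (1 * Z ω)) μ := by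
    simp only [one_mul]
    exact integrable_freedmanExpProcess hS.stronglyAdapted h0 hl ha0 hinc
  have hmgf : mgf Z μ 1 ≤ 1 := by
    simp only [mgf, one_mul]
    exact hS.integral_freedmanExpProcess_le_one h0 hl hlc ha hinc
  calc μ {ω | x ≤ S n ω ∧ predictableQuadVar μ F S n ω ≤ y}
      ≤ μ {ω | l * x - a * y ≤ Z ω} := measure_mono hsub
    _ = ENNReal.ofReal (μ.real {ω | l * x - a * y ≤ Z ω}) :=
        (ofReal_measureReal (measure_ne_top _ _)).symm
    _ ≤ ENNReal.ofReal (exp (-(l * x - a * y))) := by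
      gcongr
      calc μ.real {ω | l * x - a * y ≤ Z ω} ≤ exp (-1 * (l * x - a * y)) * mgf Z μ 1 :=
            measure_ge_le_exp_mul_mgf _ zero_le_one hint
        _ ≤ exp (-(l * x - a * y)) := by
          rw [neg_one_mul]
          exact mul_le_of_le_one_right (exp_nonneg _) hmgf

end Freedman

theorem freedman_inequality_general
    {Ω : Type*} {m : MeasurableSpace Ω} {μ : Measure Ω} [IsProbabilityMeasure μ]
    (F : Filtration ℕ m) (S : ℕ → Ω → ℝ)
    (hmart : Martingale S F μ)
    (h0 : S 0 = 0)
    (n : ℕ) (c : ℝ) (hc : 0 < c)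
    (hbdd : ∀ᵐ ω ∂μ, ∀ k ≤ n, 1 ≤ k → |S k ω - S (k - 1) ω| ≤ c)
    (x y : ℝ) (hx : 0 < x) (hy : 0 < y) :
    μ {ω | x ≤ S n ω ∧
        ∑ i ∈ range n, (μ[fun ω' => (S (i + 1) ω' - S i ω') ^ 2 | F i]) ω ≤ y}
      ≤ ENNReal.ofReal (Real.exp (-x ^ 2 / (2 * (y + c * x)))) := by
  have hinc : ∀ᵐ ω ∂μ, ∀ i < n, |S (i + 1) ω - S i ω| ≤ c := by
    filter_upwards [hbdd] with ω hω i hi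
    simpa using hω (i + 1) hi (Nat.le_add_left 1 i)
  have hyc : 0 < y + c * x := by positivity
  set l := x / (y + c * x) with hl
  have hlc : l * c < 1 := by
    rw [div_mul_eq_mul_div, div_lt_one hyc]
    nlinarith
  have hexponent : l * x - l ^ 2 / (2 * (1 - l * c)) * y = x ^ 2 / (2 * (y + c * x)) := by
    have h1lc : 1 - l * c = y / (y + c * x) := by
      rw [hl]
      field_simp
      ring
    rw [h1lc, hl]
    field_simp
    ring
  calc _ ≤ ENNReal.ofReal (exp (-(l * x - l ^ 2 / (2 * (1 - l * c)) * y))) :=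
        hmart.measure_le_and_predictableQuadVar_le_le h0 (by positivity) hlc le_rfl hinc x y
    _ = _ := by rw [hexponent, neg_div]

theorem freedman_inequality
    {Ω : Type*} {m : MeasurableSpace Ω} {μ : Measure Ω} [IsProbabilityMeasure μ]
    (F : Filtration ℕ m) (S : ℕ → Ω → ℝ)
    (hmart : Martingale S F μ)
    (hL2 : ∀ n, MemLp (S n) 2 μ)
    (h0 : S 0 = 0)
    (n : ℕ) (c : ℝ) (hc : 0 < c)
    (hbdd : ∀ᵐ ω ∂μ, ∀ k ≤ n, 1 ≤ k → |S k ω - S (k - 1) ω| ≤ c)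
    (x y : ℝ) (hx : 0 < x) (hy : 0 < y) :
    μ {ω | x ≤ S n ω ∧
        ∑ i ∈ range n, (μ[fun ω' => (S (i + 1) ω' - S i ω') ^ 2 | F i]) ω ≤ y}
      ≤ ENNReal.ofReal (Real.exp (-x ^ 2 / (2 * (y + c * x)))) :=
  freedman_inequality_general F S hmart h0 n c hc hbdd x y hx hy
end

section
/- Let (S_n)_{n≥0} be a square integrable martingale with S_0 = 0, let ⟨S⟩_n = Σ_{i=1}^n E[(S_i - S_{i-1})² | F_{i-1}] and [S]_n = Σ_{i=1}^n (S_i - S_{i-1})². Then for all x, y > 0, a ≥ 0, b > 0: P(|S_n|/(a + b⟨S⟩_n) ≥ x and ⟨S⟩_n ≥ [S]_n + y) ≤ 2·exp(-x²(ab + b²y/2)). -/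
/-!
The elementary bound `exp (u - u²/2) ≤ 1 + u + u²/2`, applied to `u = tΔ` for a martingale
difference `Δ` (so `E[Δ | F] = 0`), gives
`E[exp (tΔ - t²Δ²/2) | F] ≤ 1 + t²/2 E[Δ² | F] ≤ exp (t²/2 E[Δ² | F])`. Hence, for every real `t`,
`exp (t S_n - t²/2 ([S]_n + ⟨S⟩_n))` is a supermartingale with expectation at most one; it is
integrable because each step adds at most `1/2` to the exponent.
On the event, `x (a + b⟨S⟩_n) ≤ |S_n|` and `[S]_n ≤ ⟨S⟩_n - y`, so for `t = ±xb` (the sign of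
`S_n`) the exponent is at least `x² (ab + b²y/2)`; Markov's inequality for both signs gives the
factor `2`.
-/

open MeasureTheory ProbabilityTheory Finset Real

lemma Real.sub_sq_div_two_le_half (u : ℝ) : u - u ^ 2 / 2 ≤ 1 / 2 := by
  nlinarith [sq_nonneg (u - 1)]

/-- Since `(1 - u + u²/2)(1 + u + u²/2) = 1 + u⁴/4 ≥ 1`, this follows from
`exp v ≤ 1 / (1 - v)` at `v = u - u²/2`. -/
lemma Real.exp_sub_sq_div_two_le (u : ℝ) : exp (u - u ^ 2 / 2) ≤ 1 + u + u ^ 2 / 2 := by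
  have hv : (1 - u + u ^ 2 / 2) * exp (u - u ^ 2 / 2) ≤ 1 := by
    calc (1 - u + u ^ 2 / 2) * exp (u - u ^ 2 / 2)
        ≤ exp (-(u - u ^ 2 / 2)) * exp (u - u ^ 2 / 2) := by
          gcongr; linarith [add_one_le_exp (-(u - u ^ 2 / 2))]
      _ = 1 := by rw [← exp_add, neg_add_cancel, exp_zero]
  nlinarith [exp_pos (u - u ^ 2 / 2), sq_nonneg (u ^ 2), sq_nonneg (u - 1)]

section CondExp

variable {Ω : Type*} {m m₀ : MeasurableSpace Ω} {μ : Measure[m₀] Ω} [IsFiniteMeasure μ]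

lemma integrable_exp_mul_sub_sq_div_two {D : Ω → ℝ} (hD : AEStronglyMeasurable D μ) (t : ℝ) :
    Integrable (fun ω => exp (t * D ω - t ^ 2 / 2 * D ω ^ 2)) μ := by
  refine Integrable.mono' (integrable_const (exp (1 / 2))) ?_ (.of_forall fun ω => ?_)
  · exact continuous_exp.comp_aestronglyMeasurable
      ((hD.const_mul t).sub ((hD.pow 2).const_mul _))
  · rw [norm_of_nonneg (exp_pos _).le, exp_le_exp]
    linarith [sub_sq_div_two_le_half (t * D ω), show (t * D ω) ^ 2 = t ^ 2 * D ω ^ 2 by ring]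

lemma condExp_exp_mul_sub_sq_le (hm : m ≤ m₀) {D : Ω → ℝ} (hD : MemLp D 2 μ)
    (hD0 : μ[D | m] =ᵐ[μ] 0) (t : ℝ) :
    μ[fun ω => exp (t * D ω - t ^ 2 / 2 * D ω ^ 2) | m]
      ≤ᵐ[μ] fun ω => exp (t ^ 2 / 2 * μ[fun ω => D ω ^ 2 | m] ω) := by
  have hD1 : Integrable D μ := hD.integrable one_le_two
  have hD2 : Integrable (fun ω => D ω ^ 2) μ := hD.integrable_sq
  have hW := integrable_exp_mul_sub_sq_div_two hD.1 t
  have hP : Integrable (fun _ => (1 : ℝ)) μ := integrable_const 1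
  have hmono := condExp_mono (m := m) hW ((hP.add (hD1.smul t)).add (hD2.smul (t ^ 2 / 2)))
    (.of_forall fun ω => by
      simpa [mul_pow, mul_div_right_comm] using exp_sub_sq_div_two_le (t * D ω))
  filter_upwards [hmono, condExp_add (hP.add (hD1.smul t)) (hD2.smul (t ^ 2 / 2)) m,
    condExp_add hP (hD1.smul t) m, condExp_smul t D m,
    condExp_smul (t ^ 2 / 2) (fun ω => D ω ^ 2) m, hD0] with ω hle hsum hsum' hlin hlin' hzero
  simp only [Pi.add_apply, Pi.smul_apply, smul_eq_mul, Pi.zero_apply, condExp_const hm] at *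
  rw [hsum, hsum', hlin, hlin', hzero] at hle
  linarith [add_one_le_exp (t ^ 2 / 2 * μ[fun ω => D ω ^ 2 | m] ω)]

end CondExp

section SelfNormalized

variable {Ω : Type*} {m : MeasurableSpace Ω} {μ : Measure Ω} {F : Filtration ℕ m}
  {S : ℕ → Ω → ℝ}

/-- `[S]_n` -/
def quadVariation (S : ℕ → Ω → ℝ) (n : ℕ) (ω : Ω) : ℝ :=
  ∑ i ∈ range n, (S (i + 1) ω - S i ω) ^ 2

/-- `⟨S⟩_n` -/
noncomputable def predictableQuadVariation (μ : Measure Ω) (F : Filtration ℕ m)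
    (S : ℕ → Ω → ℝ) (n : ℕ) (ω : Ω) : ℝ :=
  ∑ i ∈ range n, (μ[fun ω' => (S (i + 1) ω' - S i ω') ^ 2 | F i]) ω

noncomputable def logExpSupermartingale (μ : Measure Ω) (F : Filtration ℕ m)
    (S : ℕ → Ω → ℝ) (t : ℝ) (n : ℕ) (ω : Ω) : ℝ :=
  t * (S n ω - S 0 ω) - t ^ 2 / 2 * (quadVariation S n ω + predictableQuadVariation μ F S n ω)

lemma logExpSupermartingale_zero (t : ℝ) (ω : Ω) :
    logExpSupermartingale μ F S t 0 ω = 0 := by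
  simp [logExpSupermartingale, quadVariation, predictableQuadVariation]

lemma logExpSupermartingale_succ (t : ℝ) (n : ℕ) (ω : Ω) :
    logExpSupermartingale μ F S t (n + 1) ω = logExpSupermartingale μ F S t n ω
      + (t * (S (n + 1) ω - S n ω) - t ^ 2 / 2 * (S (n + 1) ω - S n ω) ^ 2
        - t ^ 2 / 2 * (μ[fun ω' => (S (n + 1) ω' - S n ω') ^ 2 | F n]) ω) := by
  simp only [logExpSupermartingale, quadVariation, predictableQuadVariation, sum_range_succ]
  ring

lemma stronglyAdapted_quadVariation (hS : StronglyAdapted F S) :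
    StronglyAdapted F (quadVariation S) := fun _ =>
  Finset.stronglyMeasurable_fun_sum _ fun i hi =>
    (((hS (i + 1)).mono (F.mono (mem_range.mp hi))).sub
      ((hS i).mono (F.mono (mem_range.mp hi).le))).pow 2

lemma stronglyAdapted_predictableQuadVariation :
    StronglyAdapted F (predictableQuadVariation μ F S) := fun _ =>
  Finset.stronglyMeasurable_fun_sum _ fun _ hi =>
    stronglyMeasurable_condExp.mono (F.mono (mem_range.mp hi).le)

lemma stronglyAdapted_logExpSupermartingale (hS : StronglyAdapted F S) (t : ℝ) :
    StronglyAdapted F (logExpSupermartingale μ F S t) := fun n =>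
  (((hS n).sub ((hS 0).mono (F.mono n.zero_le))).const_mul t).sub
    (((stronglyAdapted_quadVariation hS n).add
      (stronglyAdapted_predictableQuadVariation n)).const_mul _)

lemma logExpSupermartingale_le (t : ℝ) (n : ℕ) :
    ∀ᵐ ω ∂μ, logExpSupermartingale μ F S t n ω ≤ n / 2 := by
  have hnonneg : ∀ᵐ ω ∂μ, ∀ i, 0 ≤ (μ[fun ω' => (S (i + 1) ω' - S i ω') ^ 2 | F i]) ω :=
    ae_all_iff.mpr fun i => condExp_nonneg (.of_forall fun _ => sq_nonneg _)
  filter_upwards [hnonneg] with ω hω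
  induction n with
  | zero => simp [logExpSupermartingale_zero]
  | succ n ih =>
    rw [logExpSupermartingale_succ]
    have := sub_sq_div_two_le_half (t * (S (n + 1) ω - S n ω))
    push_cast
    nlinarith [hω n, sq_nonneg t]

lemma integrable_exp_logExpSupermartingale [IsFiniteMeasure μ] (hS : StronglyAdapted F S)
    (t : ℝ) (n : ℕ) : Integrable (fun ω => exp (logExpSupermartingale μ F S t n ω)) μ := by
  refine Integrable.mono' (integrable_const (exp (n / 2))) ?_ ?_
  · exact (continuous_exp.comp_stronglyMeasurable
      ((stronglyAdapted_logExpSupermartingale hS t n).mono (F.le n))).aestronglyMeasurable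
  · filter_upwards [logExpSupermartingale_le t n] with ω hω
    rwa [norm_of_nonneg (exp_pos _).le, exp_le_exp]

lemma Martingale.condExp_sub_succ_ae_eq_zero (hS : Martingale S F μ) (n : ℕ) :
    μ[S (n + 1) - S n | F n] =ᵐ[μ] 0 := by
  filter_upwards [condExp_sub (hS.integrable (n + 1)) (hS.integrable n) (F n),
    hS.condExp_ae_eq n.le_succ, hS.condExp_ae_eq (le_refl n)] with ω hsub hsucc hself
  simp [hsub, hsucc, hself]

lemma integral_exp_logExpSupermartingale_le_one [IsProbabilityMeasure μ]
    (hS : Martingale S F μ) (hL2 : ∀ n, MemLp (S n) 2 μ) (t : ℝ) (n : ℕ) :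
    ∫ ω, exp (logExpSupermartingale μ F S t n ω) ∂μ ≤ 1 := by
  induction n with
  | zero => simp [logExpSupermartingale_zero]
  | succ n ih =>
    set g := μ[fun ω' => (S (n + 1) ω' - S n ω') ^ 2 | F n]
    set W : Ω → ℝ := fun ω =>
      exp (t * (S (n + 1) ω - S n ω) - t ^ 2 / 2 * (S (n + 1) ω - S n ω) ^ 2)
    set f : Ω → ℝ := fun ω => exp (logExpSupermartingale μ F S t n ω - t ^ 2 / 2 * g ω)
    have hsplit : (fun ω => exp (logExpSupermartingale μ F S t (n + 1) ω)) = f * W := by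
      ext ω
      simp only [Pi.mul_apply, f, W, ← exp_add, logExpSupermartingale_succ]
      congr 1
      ring
    have hf : StronglyMeasurable[F n] f := continuous_exp.comp_stronglyMeasurable
      ((stronglyAdapted_logExpSupermartingale hS.stronglyAdapted t n).sub
        (stronglyMeasurable_condExp.const_mul _))
    have hfW : Integrable (f * W) μ :=
      hsplit ▸ integrable_exp_logExpSupermartingale hS.stronglyAdapted t (n + 1)
    have hW : Integrable W μ := integrable_exp_mul_sub_sq_div_two
      ((hL2 (n + 1)).sub (hL2 n)).aestronglyMeasurable t
    have hstep : μ[f * W | F n] ≤ᵐ[μ] fun ω => exp (logExpSupermartingale μ F S t n ω) := by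
      filter_upwards [condExp_mul_of_stronglyMeasurable_left hf hfW hW,
        condExp_exp_mul_sub_sq_le (F.le n) ((hL2 (n + 1)).sub (hL2 n))
          (Martingale.condExp_sub_succ_ae_eq_zero hS n) t] with ω hpull hcond
      change μ[W | F n] ω ≤ exp (t ^ 2 / 2 * g ω) at hcond
      calc μ[f * W | F n] ω = f ω * μ[W | F n] ω := hpull
        _ ≤ f ω * exp (t ^ 2 / 2 * g ω) := by gcongr
        _ = exp (logExpSupermartingale μ F S t n ω) := by
          rw [← exp_add]
          ring_nf
    calc ∫ ω, exp (logExpSupermartingale μ F S t (n + 1) ω) ∂μ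
        = ∫ ω, (μ[f * W | F n]) ω ∂μ := by rw [hsplit, integral_condExp (F.le n)]
      _ ≤ ∫ ω, exp (logExpSupermartingale μ F S t n ω) ∂μ :=
        integral_mono_ae integrable_condExp
          (integrable_exp_logExpSupermartingale hS.stronglyAdapted t n) hstep
      _ ≤ 1 := ih

lemma measure_le_logExpSupermartingale_le [IsProbabilityMeasure μ] (hS : Martingale S F μ)
    (hL2 : ∀ n, MemLp (S n) 2 μ) (t : ℝ) (n : ℕ) (r : ℝ) :
    μ {ω | r ≤ logExpSupermartingale μ F S t n ω} ≤ ENNReal.ofReal (exp (-r)) := by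
  rw [← ofReal_measureReal]
  gcongr
  calc μ.real {ω | r ≤ logExpSupermartingale μ F S t n ω}
      ≤ exp (-1 * r) * mgf (logExpSupermartingale μ F S t n) μ 1 :=
        measure_ge_le_exp_mul_mgf r zero_le_one (by
          simpa using integrable_exp_logExpSupermartingale hS.stronglyAdapted t n)
    _ ≤ exp (-r) * 1 := by
        rw [neg_one_mul, mgf]
        gcongr
        simpa using integral_exp_logExpSupermartingale_le_one hS hL2 t n
    _ = exp (-r) := mul_one _

end SelfNormalized

lemma sq_mul_le_mul_abs_sub_of_le_abs_div {x y a b s q v : ℝ} (hx : 0 < x) (hb : 0 < b)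
    (hs : x ≤ |s| / (a + b * v)) (hq : q + y ≤ v) :
    x ^ 2 * (a * b + b ^ 2 * y / 2) ≤ x * b * |s| - (x * b) ^ 2 / 2 * (q + v) := by
  have hd : 0 < a + b * v := by
    by_contra! hd
    linarith [div_nonpos_of_nonneg_of_nonpos (abs_nonneg s) hd]
  have hxs : x * (a + b * v) ≤ |s| := (le_div_iff₀ hd).mp hs
  nlinarith [mul_le_mul_of_nonneg_left hxs (mul_pos hx hb).le, sq_nonneg (x * b)]

theorem bercu_touati_self_normalized_general
    {Ω : Type*} {m : MeasurableSpace Ω} {μ : Measure Ω} [IsProbabilityMeasure μ]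
    (F : Filtration ℕ m) (S : ℕ → Ω → ℝ)
    (hmart : Martingale S F μ)
    (hL2 : ∀ n, MemLp (S n) 2 μ)
    (h0 : S 0 = 0)
    (n : ℕ) (x y a b : ℝ) (hx : 0 < x) (hb : 0 < b) :
    μ {ω | x ≤ |S n ω| /
          (a + b * ∑ i ∈ range n, (μ[fun ω' => (S (i + 1) ω' - S i ω') ^ 2 | F i]) ω) ∧
        ∑ i ∈ range n, (S (i + 1) ω - S i ω) ^ 2 + y
          ≤ ∑ i ∈ range n, (μ[fun ω' => (S (i + 1) ω' - S i ω') ^ 2 | F i]) ω}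
      ≤ ENNReal.ofReal (2 * Real.exp (-x ^ 2 * (a * b + b ^ 2 * y / 2))) := by
  change μ {ω | x ≤ |S n ω| / (a + b * predictableQuadVariation μ F S n ω) ∧
    quadVariation S n ω + y ≤ predictableQuadVariation μ F S n ω} ≤ _
  set r := x ^ 2 * (a * b + b ^ 2 * y / 2)
  set L := logExpSupermartingale μ F S
  have hsub : {ω | x ≤ |S n ω| / (a + b * predictableQuadVariation μ F S n ω) ∧
      quadVariation S n ω + y ≤ predictableQuadVariation μ F S n ω}
        ⊆ {ω | r ≤ L (x * b) n ω} ∪ {ω | r ≤ L (-(x * b)) n ω} := by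
    rintro ω ⟨hs, hq⟩
    have key : r ≤ _ := sq_mul_le_mul_abs_sub_of_le_abs_div hx hb hs hq
    simp only [Set.mem_union, Set.mem_ofPred_eq, L, logExpSupermartingale, h0, Pi.zero_apply,
      sub_zero, neg_sq]
    rcases abs_cases (S n ω) with ⟨habs, -⟩ | ⟨habs, -⟩ <;> rw [habs] at key
    · left; linarith
    · right; linarith
  calc _ ≤ μ ({ω | r ≤ L (x * b) n ω} ∪ {ω | r ≤ L (-(x * b)) n ω}) := measure_mono hsub
    _ ≤ ENNReal.ofReal (exp (-r)) + ENNReal.ofReal (exp (-r)) :=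
        (measure_union_le _ _).trans (add_le_add
          (measure_le_logExpSupermartingale_le hmart hL2 _ n r)
          (measure_le_logExpSupermartingale_le hmart hL2 _ n r))
    _ = ENNReal.ofReal (2 * exp (-x ^ 2 * (a * b + b ^ 2 * y / 2))) := by
        rw [← ENNReal.ofReal_add (exp_pos _).le (exp_pos _).le, ← two_mul, neg_mul]

theorem bercu_touati_self_normalized
    {Ω : Type*} {m : MeasurableSpace Ω} {μ : Measure Ω} [IsProbabilityMeasure μ]
    (F : Filtration ℕ m) (S : ℕ → Ω → ℝ)
    (hmart : Martingale S F μ)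
    (hL2 : ∀ n, MemLp (S n) 2 μ)
    (h0 : S 0 = 0)
    (n : ℕ) (x y a b : ℝ) (hx : 0 < x) (hy : 0 < y) (ha : 0 ≤ a) (hb : 0 < b) :
    μ {ω | x ≤ |S n ω| /
          (a + b * ∑ i ∈ range n, (μ[fun ω' => (S (i + 1) ω' - S i ω') ^ 2 | F i]) ω) ∧
        ∑ i ∈ range n, (S (i + 1) ω - S i ω) ^ 2 + y
          ≤ ∑ i ∈ range n, (μ[fun ω' => (S (i + 1) ω' - S i ω') ^ 2 | F i]) ω}
      ≤ ENNReal.ofReal (2 * Real.exp (-x ^ 2 * (a * b + b ^ 2 * y / 2))) :=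
  bercu_touati_self_normalized_general F S hmart hL2 h0 n x y a b hx hb
end

section
/- Let ξ be a random variable with symmetric distribution (ξ and -ξ have the same law) and let λ ∈ ℝ. Then E[exp(λξ - (λ²/2)ξ²)] ≤ 1, with equality if and only if ξ = 0 almost surely (for λ ≠ 0). -/
open MeasureTheory

/-! Since `ξ` and `-ξ` have the same law, the integrand may be replaced by its even part
`(e^{t - t²/2} + e^{-t - t²/2}) / 2 = cosh t · e^{-t²/2}` with `t = λξ`. Comparing power series
term by term, `cosh t ≤ e^{t²/2}`, strictly unless `t = 0`; so the even part is at most `1`,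
with equality exactly where `λξ = 0`. -/

namespace Real

lemma cosh_lt_exp_half_sq {x : ℝ} (hx : x ≠ 0) : cosh x < exp (x ^ 2 / 2) := by
  rw [cosh_eq_tsum, exp_eq_exp_ℝ, NormedSpace.exp_eq_tsum ℝ]
  have hterm (i : ℕ) :
      x ^ (2 * i) / ((2 * i).factorial : ℝ) ≤ ((i.factorial : ℝ))⁻¹ • (x ^ 2 / 2) ^ i := by
    simp only [div_pow, pow_mul, smul_eq_mul, inv_mul_eq_div, div_div]
    gcongr
    norm_cast
    exact Nat.two_pow_mul_factorial_le_factorial_two_mul _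
  -- the quartic terms are `x ^ 4 / 24 < x ^ 4 / 8`
  refine x.hasSum_cosh.summable.tsum_lt_tsum hterm (i := 2) ?_
    (NormedSpace.expSeries_summable' (x ^ 2 / 2))
  have hx4 : 0 < x ^ 4 := by positivity
  norm_num [Nat.factorial]
  linarith

lemma exp_sub_half_sq_add_exp_neg_sub_half_sq (t : ℝ) :
    (exp (t - t ^ 2 / 2) + exp (-t - t ^ 2 / 2)) / 2 = cosh t * exp (-(t ^ 2 / 2)) := by
  rw [cosh_eq, sub_eq_add_neg, sub_eq_add_neg, exp_add, exp_add]
  ring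

lemma exp_sub_half_sq_add_exp_neg_sub_half_sq_le_one (t : ℝ) :
    (exp (t - t ^ 2 / 2) + exp (-t - t ^ 2 / 2)) / 2 ≤ 1 := by
  rw [exp_sub_half_sq_add_exp_neg_sub_half_sq, ← le_div_iff₀ (exp_pos _), exp_neg, div_inv_eq_mul,
    one_mul]
  exact cosh_le_exp_half_sq t

lemma exp_sub_half_sq_add_exp_neg_sub_half_sq_eq_one_iff {t : ℝ} :
    (exp (t - t ^ 2 / 2) + exp (-t - t ^ 2 / 2)) / 2 = 1 ↔ t = 0 := by
  refine ⟨fun h ↦ ?_, fun h ↦ by simp [h]⟩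
  by_contra ht
  rw [exp_sub_half_sq_add_exp_neg_sub_half_sq, ← eq_div_iff (exp_pos _).ne', exp_neg,
    div_inv_eq_mul, one_mul] at h
  exact (cosh_lt_exp_half_sq ht).ne h

end Real

section Symmetric

variable {Ω : Type*} {m : MeasurableSpace Ω} {μ : Measure Ω} {ξ : Ω → ℝ} {f : ℝ → ℝ}

lemma integral_comp_neg_of_map_eq_map_neg (hξ : Measurable ξ)
    (hsymm : μ.map ξ = μ.map (fun ω ↦ -ξ ω)) (hf : Measurable f) :
    ∫ ω, f (-ξ ω) ∂μ = ∫ ω, f (ξ ω) ∂μ := by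
  rw [← integral_map hξ.aemeasurable hf.aestronglyMeasurable,
    ← integral_map (φ := fun ω ↦ -ξ ω) hξ.neg.aemeasurable hf.aestronglyMeasurable, hsymm]

lemma MeasureTheory.Integrable.comp_neg_of_map_eq_map_neg (hξ : Measurable ξ)
    (hsymm : μ.map ξ = μ.map (fun ω ↦ -ξ ω)) (hf : Measurable f)
    (hfξ : Integrable (fun ω ↦ f (ξ ω)) μ) : Integrable (fun ω ↦ f (-ξ ω)) μ := by
  have hf_map : Integrable f (μ.map ξ) :=
    (integrable_map_measure hf.aestronglyMeasurable hξ.aemeasurable).mpr hfξ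
  rw [hsymm] at hf_map
  exact (integrable_map_measure hf.aestronglyMeasurable hξ.neg.aemeasurable).mp hf_map

lemma integral_comp_eq_integral_even_part_of_map_eq_map_neg (hξ : Measurable ξ)
    (hsymm : μ.map ξ = μ.map (fun ω ↦ -ξ ω)) (hf : Measurable f)
    (hfξ : Integrable (fun ω ↦ f (ξ ω)) μ) :
    ∫ ω, f (ξ ω) ∂μ = ∫ ω, (f (ξ ω) + f (-ξ ω)) / 2 ∂μ := by
  rw [integral_div, integral_add hfξ (hfξ.comp_neg_of_map_eq_map_neg hξ hsymm hf),
    integral_comp_neg_of_map_eq_map_neg hξ hsymm hf]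
  ring

end Symmetric

theorem integral_exp_le_one_of_symm
    {Ω : Type*} {m : MeasurableSpace Ω} {μ : Measure Ω} [IsProbabilityMeasure μ]
    (ξ : Ω → ℝ) (hξ : Measurable ξ)
    (hsymm : Measure.map ξ μ = Measure.map (fun ω => -ξ ω) μ)
    (l : ℝ) :
    (∫ ω, Real.exp (l * ξ ω - l ^ 2 / 2 * (ξ ω) ^ 2) ∂μ ≤ 1) ∧
    (l ≠ 0 →
      ((∫ ω, Real.exp (l * ξ ω - l ^ 2 / 2 * (ξ ω) ^ 2) ∂μ = 1) ↔ ξ =ᵐ[μ] 0)) := by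
  set f : ℝ → ℝ := fun x ↦ Real.exp (l * x - l ^ 2 / 2 * x ^ 2)
  have hf : Measurable f := by fun_prop
  have hf_bound (x : ℝ) : ‖f x‖ ≤ Real.exp (1 / 2) := by
    rw [Real.norm_eq_abs, abs_of_pos (Real.exp_pos _), Real.exp_le_exp]
    nlinarith [sq_nonneg (l * x - 1)]
  have hfξ : Integrable (fun ω ↦ f (ξ ω)) μ :=
    .of_bound (hf.comp hξ).aestronglyMeasurable _ (.of_forall fun ω ↦ hf_bound (ξ ω))
  have heven (x : ℝ) : (f x + f (-x)) / 2 =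
      (Real.exp (l * x - (l * x) ^ 2 / 2) + Real.exp (-(l * x) - (l * x) ^ 2 / 2)) / 2 := by
    simp only [f]
    ring_nf
  have hle (ω : Ω) : (f (ξ ω) + f (-ξ ω)) / 2 ≤ 1 :=
    heven _ ▸ Real.exp_sub_half_sq_add_exp_neg_sub_half_sq_le_one _
  have hint : Integrable (fun ω ↦ (f (ξ ω) + f (-ξ ω)) / 2) μ :=
    (hfξ.add (hfξ.comp_neg_of_map_eq_map_neg hξ hsymm hf)).div_const 2
  have hone : ∫ _ω, (1 : ℝ) ∂μ = 1 := by simp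
  rw [integral_comp_eq_integral_even_part_of_map_eq_map_neg hξ hsymm hf hfξ, ← hone]
  refine ⟨integral_mono hint (integrable_const 1) hle, fun hl ↦ ?_⟩
  rw [integral_eq_iff_of_ae_le hint (integrable_const 1) (.of_forall hle)]
  refine Filter.eventually_congr (.of_forall fun ω ↦ ?_)
  change (f (ξ ω) + f (-ξ ω)) / 2 = 1 ↔ ξ ω = 0
  rw [heven (ξ ω), Real.exp_sub_half_sq_add_exp_neg_sub_half_sq_eq_one_iff, mul_eq_zero,
    or_iff_right hl]
end

section
/- Let (S_n)_{n≥0} be a conditionally symmetric square integrable martingale with S_0 = 0 and let [S]_n = Σ_{i=1}^n (S_i - S_{i-1})². Then for every λ ∈ ℝ, the process (exp(λS_n - (λ²/2)[S]_n))_{n≥0} is a supermartingale with initial value 1. -/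
/-!
Write `ψ y = exp (l y - l² y² / 2)`. Since `S 0 = 0`, the process is the running product of the
factors `ψ (S (i+1) - S i)`, so it suffices that each factor has conditional expectation at
most `1`. By conditional symmetry of the increment `D`,
`E[ψ D | F] = E[ψ (-D) | F] = E[(ψ D + ψ (-D)) / 2 | F]`,
and `(ψ y + ψ (-y)) / 2 = cosh (l y) / exp ((l y)² / 2) ≤ 1`.
-/

open MeasureTheory Finset

lemma mul_sub_sq_half_le (l y : ℝ) : l * y - l ^ 2 / 2 * y ^ 2 ≤ 1 / 2 := by
  nlinarith [sq_nonneg (l * y - 1)]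

lemma exp_mul_sub_sq_half_add_neg_le_two (l y : ℝ) :
    Real.exp (l * y - l ^ 2 / 2 * y ^ 2) + Real.exp (l * -y - l ^ 2 / 2 * (-y) ^ 2) ≤ 2 := by
  have hcosh := Real.cosh_le_exp_half_sq (l * y)
  rw [Real.cosh_eq] at hcosh
  rw [show l * y - l ^ 2 / 2 * y ^ 2 = l * y - (l * y) ^ 2 / 2 by ring,
    show l * -y - l ^ 2 / 2 * (-y) ^ 2 = -(l * y) - (l * y) ^ 2 / 2 by ring,
    Real.exp_sub, Real.exp_sub, ← add_div, div_le_iff₀ (Real.exp_pos _)]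
  linarith

lemma exp_mul_sub_sum_sq_eq_prod (l : ℝ) (s : ℕ → ℝ) (hs : s 0 = 0) (n : ℕ) :
    Real.exp (l * s n - l ^ 2 / 2 * ∑ i ∈ range n, (s (i + 1) - s i) ^ 2)
      = ∏ i ∈ range n,
          Real.exp (l * (s (i + 1) - s i) - l ^ 2 / 2 * (s (i + 1) - s i) ^ 2) := by
  rw [← Real.exp_sum, sum_sub_distrib, ← mul_sum, ← mul_sum, sum_range_sub, hs, sub_zero]

section Conditional

variable {Ω : Type*} {m m₀ : MeasurableSpace Ω} {μ : Measure Ω} [IsFiniteMeasure μ]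

lemma condExp_comp_le_of_condExp_comp_neg {D : Ω → ℝ} (hD : Measurable D) (hm : m ≤ m₀)
    {g : ℝ → ℝ} (hg : Measurable g) {C : ℝ} (hgC : ∀ y, |g y| ≤ C) {c : ℝ}
    (hpair : ∀ y, g y + g (-y) ≤ 2 * c)
    (hsymm : μ[fun ω => g (D ω) | m] =ᵐ[μ] μ[fun ω => g (-D ω) | m]) :
    μ[fun ω => g (D ω) | m] ≤ᵐ[μ] fun _ => c := by
  have hint : ∀ f : Ω → ℝ, Measurable f → Integrable (fun ω => g (f ω)) μ := fun f hf =>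
    .of_bound (hg.comp hf).aestronglyMeasurable C (ae_of_all _ fun ω => hgC (f ω))
  have hsum : μ[(fun ω => g (D ω)) + fun ω => g (-D ω) | m] ≤ᵐ[μ] fun _ => 2 * c := by
    rw [← condExp_const (μ := μ) hm (2 * c)]
    exact condExp_mono ((hint D hD).add (hint (fun ω => -D ω) hD.neg)) (integrable_const _)
      (ae_of_all _ fun ω => hpair (D ω))
  filter_upwards [hsymm, condExp_add (hint D hD) (hint (fun ω => -D ω) hD.neg) m, hsum]
    with ω h₁ h₂ h₃
  rw [Pi.add_apply] at h₂
  linarith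

lemma supermartingale_of_eq_prod_range {F : Filtration ℕ m₀} {X Y : ℕ → Ω → ℝ}
    (hXY : ∀ n ω, X n ω = ∏ i ∈ range n, Y i ω)
    (hY : ∀ n, StronglyMeasurable[F (n + 1)] (Y n)) (hY_nonneg : ∀ n ω, 0 ≤ Y n ω)
    {C : ℝ} (hYC : ∀ n ω, Y n ω ≤ C)
    (hY_cond : ∀ n, μ[Y n | F n] ≤ᵐ[μ] fun _ => 1) :
    Supermartingale X F μ := by
  have hX : StronglyAdapted F X := fun n => by
    rw [funext (hXY n)]
    exact Finset.stronglyMeasurable_fun_prod _ fun i hi => (hY i).mono (F.mono (mem_range.1 hi))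
  have hX_nonneg : ∀ n ω, 0 ≤ X n ω := fun n ω => by
    rw [hXY]; exact prod_nonneg fun i _ => hY_nonneg i ω
  have hX_int : ∀ n, Integrable (X n) μ := fun n =>
    .of_bound ((hX n).mono (F.le n)).aestronglyMeasurable (C ^ n) (ae_of_all _ fun ω => by
      rw [Real.norm_eq_abs, abs_of_nonneg (hX_nonneg n ω), hXY]
      calc ∏ i ∈ range n, Y i ω ≤ ∏ _i ∈ range n, C :=
            prod_le_prod (fun i _ => hY_nonneg i ω) fun i _ => hYC i ω
        _ = C ^ n := by simp)
  refine supermartingale_nat hX hX_int fun n => ?_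
  have hX_succ : X (n + 1) = X n * Y n := funext fun ω => by
    rw [Pi.mul_apply, hXY, hXY, prod_range_succ]
  have hY_int : Integrable (Y n) μ :=
    .of_bound ((hY n).mono (F.le _)).aestronglyMeasurable C (ae_of_all _ fun ω => by
      rw [Real.norm_eq_abs, abs_of_nonneg (hY_nonneg n ω)]; exact hYC n ω)
  rw [hX_succ]
  filter_upwards [condExp_mul_of_stronglyMeasurable_left (hX n) (hX_succ ▸ hX_int (n + 1)) hY_int,
    hY_cond n] with ω h₁ h₂
  rw [h₁, Pi.mul_apply]
  exact mul_le_of_le_one_right (hX_nonneg n ω) h₂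

end Conditional

theorem exp_supermartingale_of_cond_symm_general
    {Ω : Type*} {m : MeasurableSpace Ω} {μ : Measure Ω} [IsProbabilityMeasure μ]
    (F : Filtration ℕ m) (S : ℕ → Ω → ℝ)
    (hmart : Martingale S F μ)
    (h0 : S 0 = 0)
    (hsymm : ∀ n, ∀ g : ℝ → ℝ, Measurable g → (∃ C, ∀ y, |g y| ≤ C) →
      μ[fun ω => g (S (n + 1) ω - S n ω) | F n]
        =ᵐ[μ] μ[fun ω => g (-(S (n + 1) ω - S n ω)) | F n])
    (l : ℝ) :
    Supermartingale
      (fun n ω => Real.exp (l * S n ω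
        - l ^ 2 / 2 * ∑ i ∈ range n, (S (i + 1) ω - S i ω) ^ 2)) F μ ∧
    (∀ ω, Real.exp (l * S 0 ω
        - l ^ 2 / 2 * ∑ i ∈ range 0, (S (i + 1) ω - S i ω) ^ 2) = 1) := by
  set ψ : ℝ → ℝ := fun y => Real.exp (l * y - l ^ 2 / 2 * y ^ 2)
  have hψ : Measurable ψ := by fun_prop
  have hψ_le : ∀ y, ψ y ≤ Real.exp (1 / 2) := fun y =>
    Real.exp_le_exp.2 (mul_sub_sq_half_le l y)
  have hψ_abs : ∀ y, |ψ y| ≤ Real.exp (1 / 2) := fun y =>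
    (abs_of_pos (Real.exp_pos _)).trans_le (hψ_le y)
  have hΔ : ∀ n, Measurable[F (n + 1)] fun ω => S (n + 1) ω - S n ω := fun n =>
    (hmart.stronglyAdapted _).measurable.sub
      ((hmart.stronglyAdapted n).mono (F.mono n.le_succ)).measurable
  refine ⟨?_, fun ω => by simp [h0]⟩
  refine supermartingale_of_eq_prod_range (Y := fun n ω => ψ (S (n + 1) ω - S n ω))
    (fun n ω => exp_mul_sub_sum_sq_eq_prod l (S · ω) (congrFun h0 ω) n)
    (fun n => (hψ.comp (hΔ n)).stronglyMeasurable) (fun _ _ => (Real.exp_pos _).le)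
    (fun _ _ => hψ_le _) fun n => ?_
  exact condExp_comp_le_of_condExp_comp_neg ((hΔ n).mono (F.le _) le_rfl) (F.le n) hψ hψ_abs
    (fun y => (exp_mul_sub_sq_half_add_neg_le_two l y).trans_eq (mul_one 2).symm)
    (hsymm n ψ hψ ⟨_, hψ_abs⟩)

theorem exp_supermartingale_of_cond_symm
    {Ω : Type*} {m : MeasurableSpace Ω} {μ : Measure Ω} [IsProbabilityMeasure μ]
    (F : Filtration ℕ m) (S : ℕ → Ω → ℝ)
    (hmart : Martingale S F μ)
    (hL2 : ∀ n, MemLp (S n) 2 μ)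
    (h0 : S 0 = 0)
    (hsymm : ∀ n, ∀ g : ℝ → ℝ, Measurable g → (∃ C, ∀ y, |g y| ≤ C) →
      μ[fun ω => g (S (n + 1) ω - S n ω) | F n]
        =ᵐ[μ] μ[fun ω => g (-(S (n + 1) ω - S n ω)) | F n])
    (l : ℝ) :
    Supermartingale
      (fun n ω => Real.exp (l * S n ω
        - l ^ 2 / 2 * ∑ i ∈ range n, (S (i + 1) ω - S i ω) ^ 2)) F μ ∧
    (∀ ω, Real.exp (l * S 0 ω
        - l ^ 2 / 2 * ∑ i ∈ range 0, (S (i + 1) ω - S i ω) ^ 2) = 1) :=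
  exp_supermartingale_of_cond_symm_general F S hmart h0 hsymm l
end
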